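/- arXiv:2103.05830 — 9 statements merged into one kernel-verified Lean document; each statement's English description precedes it below -/
import Mathlib

section
/- For all positive integers n, the sum over k from 0 to n-1 of (2k+1)·A_k(x) equals n times the sum over k from 0 to n-1 of C(n-1,k)·C(n+k,k)·C(n+k,2k+1)·C(2k,k)·x^k, where A_k(x) is the Apéry polynomial. -/
/-!
Comparing coefficients of `x^j`, the left side contributes `∑_{k<n} (2k+1) c_k^2` with
`c_k = C(k,j) C(k+j,j)`. Put `b_n = (2j+1) C(n+j,2j+1) C(2j,j)`. Then `b_n = (n-j) c_n` and
`b_{n+1} = (n+j+1) c_n`, so `b_{n+1}^2 - b_n^2 = (2j+1)(2n+1) c_n^2`: the sum telescopes to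
`b_n^2 / (2j+1)`, and `b_n = n C(n-1,j) C(n+j,j)` turns this into the coefficient on the right.
-/

open Finset

/-- The Apéry polynomial `A_n(x) = ∑_{k=0}^n C(n,k)^2 C(n+k,k)^2 x^k`. -/
def aperyPoly (n : ℕ) (x : ℚ) : ℚ :=
  ∑ k ∈ Finset.range (n + 1),
    ((n.choose k : ℚ)) ^ 2 * (((n + k).choose k : ℚ)) ^ 2 * x ^ k

namespace Nat

theorem add_choose_two_mul_mul_choose (n j : ℕ) :
    (n + j).choose (2 * j) * (2 * j).choose j = n.choose j * (n + j).choose j := by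
  rw [choose_mul (by omega), show n + j - j = n by omega, show 2 * j - j = j by omega, mul_comm]

theorem two_mul_add_one_mul_choose_succ (n j : ℕ) :
    (2 * j + 1) * (n + j + 1).choose (2 * j + 1) * (2 * j).choose j =
      (n + j + 1) * (n.choose j * (n + j).choose j) := by
  rw [← add_choose_two_mul_mul_choose, ← mul_assoc, add_one_mul_choose_eq]
  ring

theorem two_mul_add_one_mul_choose_add_mul (n j : ℕ) :
    (2 * j + 1) * (n + j).choose (2 * j + 1) * (2 * j).choose j +
        j * (n.choose j * (n + j).choose j) =
      n * (n.choose j * (n + j).choose j) := by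
  rcases lt_or_ge n j with h | h
  · simp [choose_eq_zero_of_lt h, choose_eq_zero_of_lt (by omega : n + j < 2 * j + 1)]
  · obtain ⟨m, rfl⟩ := exists_add_of_le h
    rw [← add_choose_two_mul_mul_choose, mul_comm (2 * j + 1), choose_succ_right_eq,
      show j + m + j - 2 * j = m by omega]
    ring

theorem two_mul_add_one_mul_choose (n j : ℕ) :
    (2 * j + 1) * (n + j).choose (2 * j + 1) * (2 * j).choose j =
      n * (n - 1).choose j * (n + j).choose j := by
  cases n with
  | zero => simp [choose_eq_zero_of_lt (by omega : j < 2 * j + 1)]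
  | succ m =>
    have h := add_one_mul_choose_eq (m + j) m
    rw [choose_symm_add, choose_symm_of_eq_add (show m + j + 1 = m + 1 + j by omega)] at h
    rw [show m + 1 + j = m + j + 1 by omega, two_mul_add_one_mul_choose_succ,
      add_tsub_cancel_right]
    linear_combination m.choose j * h

theorem two_mul_add_one_mul_sum_sq (j n : ℕ) :
    (2 * j + 1) * ∑ k ∈ Finset.range n, (2 * k + 1) * (k.choose j * (k + j).choose j) ^ 2 =
      ((2 * j + 1) * (n + j).choose (2 * j + 1) * (2 * j).choose j) ^ 2 := by
  induction n with
  | zero => simp [choose_eq_zero_of_lt (by omega : j < 2 * j + 1)]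
  | succ n ih =>
    have hb := two_mul_add_one_mul_choose_add_mul n j
    rw [Finset.sum_range_succ, mul_add, ih, show n + 1 + j = n + j + 1 by omega,
      two_mul_add_one_mul_choose_succ]
    set b := (2 * j + 1) * (n + j).choose (2 * j + 1) * (2 * j).choose j
    set c := n.choose j * (n + j).choose j
    zify at hb ⊢
    linear_combination (b - j * c + n * c : ℤ) * hb

theorem sum_two_mul_add_one_mul_sq (j n : ℕ) :
    ∑ k ∈ Finset.range n, (2 * k + 1) * (k.choose j * (k + j).choose j) ^ 2 =
      n * (n - 1).choose j * (n + j).choose j * (n + j).choose (2 * j + 1) *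
        (2 * j).choose j := by
  apply Nat.eq_of_mul_eq_mul_left (by omega : 0 < 2 * j + 1)
  rw [two_mul_add_one_mul_sum_sq, sq]
  nth_rewrite 1 [two_mul_add_one_mul_choose]
  ring

end Nat

theorem aperyPoly_eq_sum_range {k n : ℕ} (hkn : k < n) (x : ℚ) :
    aperyPoly k x = ∑ j ∈ range n, (k.choose j : ℚ) ^ 2 * ((k + j).choose j : ℚ) ^ 2 * x ^ j := by
  refine sum_subset (range_subset_range.2 hkn) fun j _ hj => ?_
  simp [Nat.choose_eq_zero_of_lt (by simpa using hj : k < j)]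

theorem sum_two_k_add_one_aperyPoly_general (n : ℕ) (x : ℚ) :
    ∑ k ∈ Finset.range n, (2 * (k : ℚ) + 1) * aperyPoly k x =
      (n : ℚ) * ∑ k ∈ Finset.range n,
        ((n - 1).choose k : ℚ) * ((n + k).choose k : ℚ) *
          ((n + k).choose (2 * k + 1) : ℚ) * ((2 * k).choose k : ℚ) * x ^ k := by
  calc ∑ k ∈ range n, (2 * (k : ℚ) + 1) * aperyPoly k x
      = ∑ j ∈ range n, ∑ k ∈ range n,
          (2 * (k : ℚ) + 1) * ((k.choose j : ℚ) * ((k + j).choose j : ℚ)) ^ 2 * x ^ j := by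
        rw [sum_comm]
        refine sum_congr rfl fun k hk => ?_
        rw [aperyPoly_eq_sum_range (mem_range.1 hk), mul_sum]
        exact sum_congr rfl fun j _ => by ring
    _ = _ := by
        rw [mul_sum]
        refine sum_congr rfl fun j _ => ?_
        have h := congrArg (Nat.cast : ℕ → ℚ) (Nat.sum_two_mul_add_one_mul_sq j n)
        push_cast at h
        rw [← sum_mul, h]
        ring

theorem sum_two_k_add_one_aperyPoly (n : ℕ) (hn : 0 < n) (x : ℚ) :
    ∑ k ∈ Finset.range n, (2 * (k : ℚ) + 1) * aperyPoly k x =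
      (n : ℚ) * ∑ k ∈ Finset.range n,
        ((n - 1).choose k : ℚ) * ((n + k).choose k : ℚ) *
          ((n + k).choose (2 * k + 1) : ℚ) * ((2 * k).choose k : ℚ) * x ^ k :=
  sum_two_k_add_one_aperyPoly_general n x
end

section
/- For all positive integers n, \sum_{k=0}^{n-1}(2k+1)A_k(x) = \sum_{k=0}^{n-1} \frac{n^2}{2k+1} \binom{n-1}{k}^2 \binom{n+k}{k}^2 x^k. -/
open Finset

/-!
Let `T n k = n² / (2k+1) · C(n-1,k)² C(n+k,k)²` (`aperyCoeff n k`). Both `n C(n-1,k)` and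
`(n+1) C(n+1+k,k)` are multiples of `C(n,k) C(n+k,k)`, namely by `n - k` and `n + 1 + k`, so
`T (n+1) k - T n k = C(n,k)² C(n+k,k)² ((n+1+k)² - (n-k)²) / (2k+1) = (2n+1) C(n,k)² C(n+k,k)²`,
the `k`-th coefficient of `(2n+1) A_n`. Since moreover `T n n = 0`, both sides grow by the same
amount from `n` to `n + 1`.
-/

theorem Nat.cast_choose_sub_one_mul {R : Type*} [CommRing R] (n k : ℕ) :
    ((n - 1).choose k : R) * n = n.choose k * (n - k) := by
  cases n with
  | zero => cases k <;> simp
  | succ m =>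
    rcases le_or_gt k (m + 1) with hk | hk
    · rw [← Nat.cast_sub hk, ← Nat.cast_mul, ← Nat.cast_mul, Nat.add_sub_cancel,
        Nat.choose_mul_succ_eq]
    · simp [Nat.choose_eq_zero_of_lt hk, Nat.choose_eq_zero_of_lt (show m < k by omega)]

theorem Nat.cast_add_one_add_choose_mul {R : Type*} [CommRing R] (n k : ℕ) :
    ((n + 1 + k).choose k : R) * (n + 1) = (n + k).choose k * (n + 1 + k) := by
  have h := Nat.choose_mul_succ_eq (n + k) k
  rw [show n + k + 1 - k = n + 1 by omega, show n + k + 1 = n + 1 + k by omega] at h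
  simpa using congrArg (Nat.cast : ℕ → R) h.symm

def aperyCoeff (n k : ℕ) : ℚ :=
  (n : ℚ) ^ 2 / (2 * (k : ℚ) + 1) * ((n - 1).choose k : ℚ) ^ 2 * ((n + k).choose k : ℚ) ^ 2

theorem aperyCoeff_eq (n k : ℕ) :
    aperyCoeff n k =
      (n.choose k : ℚ) ^ 2 * ((n + k).choose k : ℚ) ^ 2 * ((n : ℚ) - k) ^ 2 / (2 * k + 1) := by
  have h := Nat.cast_choose_sub_one_mul (R := ℚ) n k
  rw [aperyCoeff]
  linear_combination ((n + k).choose k : ℚ) ^ 2 / (2 * k + 1) *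
    (((n - 1).choose k : ℚ) * n + n.choose k * (n - k)) * h

theorem aperyCoeff_succ (n k : ℕ) :
    aperyCoeff (n + 1) k =
      (n.choose k : ℚ) ^ 2 * ((n + k).choose k : ℚ) ^ 2 * ((n : ℚ) + 1 + k) ^ 2 / (2 * k + 1) := by
  have h := Nat.cast_add_one_add_choose_mul (R := ℚ) n k
  rw [aperyCoeff, Nat.add_sub_cancel]
  push_cast
  linear_combination (n.choose k : ℚ) ^ 2 / (2 * k + 1) *
    (((n + 1 + k).choose k : ℚ) * (n + 1) + (n + k).choose k * (n + 1 + k)) * h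

theorem aperyCoeff_self (n : ℕ) : aperyCoeff n n = 0 := by
  simp [aperyCoeff_eq]

theorem aperyCoeff_succ_sub (n k : ℕ) :
    aperyCoeff (n + 1) k - aperyCoeff n k =
      (2 * n + 1) * (n.choose k : ℚ) ^ 2 * ((n + k).choose k : ℚ) ^ 2 := by
  rw [aperyCoeff_succ, aperyCoeff_eq]
  field_simp
  ring

theorem sum_two_k_add_one_aperyPoly_eq_general (n : ℕ) (x : ℚ) :
    ∑ k ∈ Finset.range n, (2 * (k : ℚ) + 1) * aperyPoly k x =
      ∑ k ∈ Finset.range n,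
        (n : ℚ) ^ 2 / (2 * (k : ℚ) + 1) * ((n - 1).choose k : ℚ) ^ 2 *
          ((n + k).choose k : ℚ) ^ 2 * x ^ k := by
  change _ = ∑ k ∈ range n, aperyCoeff n k * x ^ k
  induction n with
  | zero => simp
  | succ n ih =>
    rw [sum_range_succ, ih, aperyPoly, mul_sum, ← add_zero (∑ k ∈ range n, _), ← zero_mul (x ^ n), ← aperyCoeff_self n,
      ← sum_range_succ (fun k ↦ aperyCoeff n k * x ^ k), ← sum_add_distrib]
    refine sum_congr rfl fun k _ ↦ ?_
    linear_combination (-x ^ k) * aperyCoeff_succ_sub n k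

theorem sum_two_k_add_one_aperyPoly_eq (n : ℕ) (hn : 0 < n) (x : ℚ) :
    ∑ k ∈ Finset.range n, (2 * (k : ℚ) + 1) * aperyPoly k x =
      ∑ k ∈ Finset.range n,
        (n : ℚ) ^ 2 / (2 * (k : ℚ) + 1) * ((n - 1).choose k : ℚ) ^ 2 *
          ((n + k).choose k : ℚ) ^ 2 * x ^ k :=
  sum_two_k_add_one_aperyPoly_eq_general n x
end

section
/- For all positive integers n, \sum_{k=0}^{n-1}(2k+1)^3 A_k = n^2 \sum_{k=0}^{n-1} \binom{n+k}{k}^2 \binom{n-1}{k}^2 \left(\frac{2n^2}{k+1} - 1\right), where A_k is the k-th Apéry number. -/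
/-!
Write `S n` for the right-hand side. It suffices to show `S (n + 1) - S n = (2n + 1)³ Aₙ`, and this
holds summand by summand (a creative-telescoping certificate): after the Pascal-type relations
`C(n+1+j, j) (n+1) = C(n+j, j) (n+j+1)` and `n C(n-1, j) = (n-j) C(n, j)` express every binomial
through `C(n, j)` and `C(n+j, j)`, the difference of the `j`-th summands is a rational-function identity.
-/

open Finset

/-- The Apéry numbers `A_n = ∑_{k=0}^n C(n,k)^2 C(n+k,k)^2`. -/
def apery (n : ℕ) : ℕ :=
  ∑ k ∈ Finset.range (n + 1), (n.choose k) ^ 2 * ((n + k).choose k) ^ 2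

def aperyCubeWeight (n k : ℕ) : ℚ :=
  ((n + k).choose k : ℚ) ^ 2 * ((n - 1).choose k : ℚ) ^ 2 * (2 * (n : ℚ) ^ 2 / ((k : ℚ) + 1) - 1)

def aperyCubeSum (n : ℕ) : ℚ :=
  (n : ℚ) ^ 2 * ∑ k ∈ range n, aperyCubeWeight n k

lemma cast_apery (n : ℕ) :
    (apery n : ℚ) = ∑ j ∈ range (n + 1), (n.choose j : ℚ) ^ 2 * ((n + j).choose j : ℚ) ^ 2 := by
  simp [apery]

lemma add_succ_choose_mul (n j : ℕ) :
    (n + 1 + j).choose j * (n + 1) = (n + j).choose j * (n + j + 1) := by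
  have h := Nat.choose_mul_succ_eq (n + j) j
  rw [show n + j + 1 - j = n + 1 by omega] at h
  rw [show n + 1 + j = n + j + 1 by omega, h]

lemma mul_sub_one_choose (n j : ℕ) : n * (n - 1).choose j = (n - j) * n.choose j := by
  rcases n with _ | n
  · simp
  · simpa [mul_comm] using Nat.choose_mul_succ_eq n j

lemma sq_mul_aperyCubeWeight_succ {n j : ℕ} (hj : j ≤ n) :
    ((n : ℚ) + 1) ^ 2 * aperyCubeWeight (n + 1) j =
      (n : ℚ) ^ 2 * aperyCubeWeight n j
        + (2 * (n : ℚ) + 1) ^ 3 * ((n.choose j : ℚ) ^ 2 * ((n + j).choose j : ℚ) ^ 2) := by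
  have hupper : ((n + 1 + j).choose j : ℚ) * ((n : ℚ) + 1) =
      ((n + j).choose j : ℚ) * ((n : ℚ) + j + 1) := by
    exact_mod_cast add_succ_choose_mul n j
  have hlower : (n : ℚ) * ((n - 1).choose j : ℚ) = ((n : ℚ) - j) * (n.choose j : ℚ) := by
    rw [← Nat.cast_sub hj]
    exact_mod_cast mul_sub_one_choose n j
  unfold aperyCubeWeight
  rw [Nat.add_sub_cancel]
  push_cast
  field_simp
  -- `hupper` and `hlower` enter squared, through `a² - b² = (a + b) (a - b)`.
  linear_combination
    (2 * ((n : ℚ) + 1) ^ 2 - (j + 1)) * (n.choose j : ℚ) ^ 2 *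
        (((n + 1 + j).choose j : ℚ) * ((n : ℚ) + 1) + ((n + j).choose j : ℚ) * ((n : ℚ) + j + 1))
        * hupper
      - (2 * (n : ℚ) ^ 2 - (j + 1)) * ((n + j).choose j : ℚ) ^ 2 *
        ((n : ℚ) * ((n - 1).choose j : ℚ) + ((n : ℚ) - j) * (n.choose j : ℚ)) * hlower

lemma sq_mul_aperyCubeWeight_self (n : ℕ) : (n : ℚ) ^ 2 * aperyCubeWeight n n = 0 := by
  rcases n with _ | n
  · simp
  · simp [aperyCubeWeight]

lemma aperyCubeSum_succ (n : ℕ) :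
    aperyCubeSum (n + 1) = aperyCubeSum n + (2 * (n : ℚ) + 1) ^ 3 * apery n := by
  have hextend : aperyCubeSum n = (n : ℚ) ^ 2 * ∑ k ∈ range (n + 1), aperyCubeWeight n k := by
    rw [aperyCubeSum, sum_range_succ, mul_add, sq_mul_aperyCubeWeight_self, add_zero]
  rw [hextend, cast_apery, mul_sum, mul_sum, ← sum_add_distrib, aperyCubeSum, Nat.cast_succ, mul_sum]
  exact sum_congr rfl fun j hj =>
    sq_mul_aperyCubeWeight_succ (Nat.lt_succ_iff.mp (mem_range.mp hj))

theorem sum_two_k_add_one_cube_apery_general (n : ℕ) :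
    ∑ k ∈ Finset.range n, (2 * (k : ℚ) + 1) ^ 3 * (apery k : ℚ) =
      (n : ℚ) ^ 2 * ∑ k ∈ Finset.range n,
        ((n + k).choose k : ℚ) ^ 2 * ((n - 1).choose k : ℚ) ^ 2 *
          (2 * (n : ℚ) ^ 2 / ((k : ℚ) + 1) - 1) := by
  change _ = aperyCubeSum n
  induction n with
  | zero => simp [aperyCubeSum]
  | succ n ih => rw [sum_range_succ, ih, aperyCubeSum_succ]

theorem sum_two_k_add_one_cube_apery (n : ℕ) (hn : 0 < n) :
    ∑ k ∈ Finset.range n, (2 * (k : ℚ) + 1) ^ 3 * (apery k : ℚ) =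
      (n : ℚ) ^ 2 * ∑ k ∈ Finset.range n,
        ((n + k).choose k : ℚ) ^ 2 * ((n - 1).choose k : ℚ) ^ 2 *
          (2 * (n : ℚ) ^ 2 / ((k : ℚ) + 1) - 1) :=
  sum_two_k_add_one_cube_apery_general n
end

section
/- For all positive integers n, \frac{(-1)^n}{n^2} \sum_{k=0}^{n-1}(3k+2)(-1)^k f_k = n \sum_{k=1}^{n} \binom{n-1}{k-1}^3 \frac{n^2-4k^2}{k^3} + 1, where f_k is the k-th Franel number. -/
/-!
Put `W n = ∑ₖ C(n,k)³ (n² - 4k²)`. Expanding `C(s+1,k) = C(s,k-1) + C(s,k)` and using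
`k C(s+1,k) = (s+1) C(s,k-1)` gives `3 W (s+1) = (s+1)² (f (s+1) - 8 f s)`; with this, Franel's
recurrence `(n+2)² f (n+2) = (7n² + 21n + 16) f (n+1) + 8 (n+1)² f n` (checked through a
Wilf–Zeilberger certificate) becomes `W (n+1) + W n = -(3n+2) f n`. So the alternating sum on the
left telescopes to `(-1)ⁿ W n`, and the right-hand side is `W n / n²` by `k C(n,k) = n C(n-1,k-1)`.
-/

open Finset

/-- The Franel numbers `f_n = ∑_{k=0}^n C(n,k)^3`. -/
def franel (n : ℕ) : ℕ := ∑ k ∈ Finset.range (n + 1), (n.choose k) ^ 3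

-- Without truncated subtraction this holds for every `k` (both sides vanish for `k > n + 1`),
-- so the certificate identity below needs no case split on `k`.
theorem Nat.cast_choose_mul_succ_eq {R : Type*} [CommRing R] (n k : ℕ) :
    (n.choose k : R) * (n + 1) = ((n + 1).choose k : R) * (n + 1 - k) := by
  rcases le_or_gt k (n + 1) with hk | hk
  · have h := congrArg (Nat.cast : ℕ → R) (Nat.choose_mul_succ_eq n k)
    push_cast [hk] at h
    exact h
  · simp [Nat.choose_eq_zero_of_lt hk, Nat.choose_eq_zero_of_lt (Nat.lt_of_succ_lt hk)]

-- The WZ certificate of Franel's recurrence, as produced by Zeilberger's algorithm.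
def franelCertificatePoly (n k : ℤ) : ℤ :=
  4 * k ^ 3 - (18 * n + 30) * k ^ 2 + (27 * n ^ 2 + 93 * n + 78) * k
    - (14 * n ^ 3 + 74 * n ^ 2 + 128 * n + 72)

def franelCertificate (n k : ℕ) : ℤ :=
  ((n + 2).choose k : ℤ) ^ 3 * k ^ 3 * franelCertificatePoly n k

theorem franelCertificate_succ_sub (n k : ℕ) :
    franelCertificate n (k + 1) - franelCertificate n k =
      (n + 1) * (n + 2) ^ 3 * ((n + 2) ^ 2 * ((n + 2).choose k : ℤ) ^ 3
        - (7 * n ^ 2 + 21 * n + 16) * ((n + 1).choose k : ℤ) ^ 3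
        - 8 * (n + 1) ^ 2 * (n.choose k : ℤ) ^ 3) := by
  have h₀ := congrArg (· ^ 3) (Nat.cast_choose_mul_succ_eq (R := ℤ) n k)
  have h₁ := congrArg (· ^ 3) (Nat.cast_choose_mul_succ_eq (R := ℤ) (n + 1) k)
  have h₂ := congrArg (fun m : ℕ => (m : ℤ) ^ 3) (Nat.add_one_mul_choose_eq (n + 1) k)
  rw [show n + 1 + 1 = n + 2 from rfl] at h₁ h₂
  push_cast at h₀ h₁ h₂
  unfold franelCertificate
  push_cast
  set N : ℤ := (n : ℤ)
  set K : ℤ := (k : ℤ)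
  linear_combination (norm := (unfold franelCertificatePoly; ring))
    -franelCertificatePoly N (K + 1) * h₂ + 8 * (N + 2) ^ 3 * h₀
      + (franelCertificatePoly N (K + 1) + (N + 1) * (7 * N ^ 2 + 21 * N + 16)
        + 8 * (N + 1 - K) ^ 3) * h₁

theorem franel_eq_sum_range {n N : ℕ} (h : n < N) : franel n = ∑ k ∈ range N, n.choose k ^ 3 :=
  sum_subset (range_subset_range.2 h) fun k _ hk => by
    simp [Nat.choose_eq_zero_of_lt (by simpa using hk : n < k)]

theorem franel_recurrence (n : ℕ) :
    (n + 2) ^ 2 * franel (n + 2) =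
      (7 * n ^ 2 + 21 * n + 16) * franel (n + 1) + 8 * (n + 1) ^ 2 * franel n := by
  have htel := sum_range_sub (franelCertificate n) (n + 3)
  have hlast : franelCertificate n (n + 3) = 0 := by simp [franelCertificate]
  have hfirst : franelCertificate n 0 = 0 := by simp [franelCertificate]
  simp only [franelCertificate_succ_sub, ← mul_sum, sum_sub_distrib, hlast, hfirst] at htel
  have hf (m : ℕ) (hm : m < n + 3) : (franel m : ℤ) = ∑ k ∈ range (n + 3), (m.choose k : ℤ) ^ 3 := by
    rw [franel_eq_sum_range hm]; push_cast; rfl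
  rw [← hf n (by omega), ← hf (n + 1) (by omega), ← hf (n + 2) (by omega)] at htel
  have hpos : ((n : ℤ) + 1) * (n + 2) ^ 3 ≠ 0 := by positivity
  zify
  linear_combination (mul_eq_zero.1 htel).resolve_left hpos

theorem sum_choose_mul_choose_succ_sq (s : ℕ) :
    ∑ j ∈ range (s + 1), s.choose j * s.choose (j + 1) ^ 2 =
      ∑ j ∈ range (s + 1), s.choose j ^ 2 * s.choose (j + 1) := by
  rw [sum_range_succ, sum_range_succ, Nat.choose_succ_self, zero_pow two_ne_zero, mul_zero,
    mul_zero, add_zero, add_zero, ← sum_range_reflect]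
  refine sum_congr rfl fun j hj => ?_
  have hj : j < s := mem_range.1 hj
  rw [show s - 1 - j + 1 = s - j by omega, Nat.choose_symm hj.le,
    Nat.choose_symm_of_eq_add (show s = s - 1 - j + (j + 1) by omega)]
  ring

theorem franel_succ (s : ℕ) :
    franel (s + 1) = 2 * franel s + 6 * ∑ j ∈ range (s + 1), s.choose j ^ 2 * s.choose (j + 1) := by
  have hshift : franel s = ∑ j ∈ range (s + 1), s.choose (j + 1) ^ 3 + 1 := by
    rw [franel_eq_sum_range (by omega : s < s + 2), sum_range_succ']
    simp
  have hpascal (j : ℕ) : (s + 1).choose (j + 1) ^ 3 = s.choose j ^ 3 + s.choose (j + 1) ^ 3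
      + 3 * (s.choose j ^ 2 * s.choose (j + 1)) + 3 * (s.choose j * s.choose (j + 1) ^ 2) := by
    rw [Nat.choose_succ_succ']
    ring
  rw [franel, sum_range_succ']
  simp only [hpascal, sum_add_distrib, ← mul_sum, sum_choose_mul_choose_succ_sq,
    Nat.choose_zero_right, one_pow]
  change franel s + _ + _ + _ + 1 = _
  omega

theorem sum_choose_cube_mul_sq (s : ℕ) :
    ∑ k ∈ range (s + 2), (s + 1).choose k ^ 3 * k ^ 2 =
      (s + 1) ^ 2 * (franel s + ∑ j ∈ range (s + 1), s.choose j ^ 2 * s.choose (j + 1)) := by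
  have hterm (j : ℕ) : (s + 1).choose (j + 1) ^ 3 * (j + 1) ^ 2 =
      (s + 1) ^ 2 * (s.choose j ^ 3 + s.choose j ^ 2 * s.choose (j + 1)) := by
    calc (s + 1).choose (j + 1) ^ 3 * (j + 1) ^ 2
        = ((s + 1).choose (j + 1) * (j + 1)) ^ 2 * (s + 1).choose (j + 1) := by ring
      _ = ((s + 1) * s.choose j) ^ 2 * (s.choose j + s.choose (j + 1)) := by
        rw [← Nat.add_one_mul_choose_eq, Nat.choose_succ_succ']
      _ = _ := by ring
  rw [sum_range_succ']
  simp [hterm, ← mul_sum, sum_add_distrib, franel]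

def franelMoment (n : ℕ) : ℤ := ∑ k ∈ range (n + 1), (n.choose k : ℤ) ^ 3 * (n ^ 2 - 4 * k ^ 2)

theorem franelMoment_eq (n : ℕ) :
    franelMoment n = n ^ 2 * franel n - 4 * ∑ k ∈ range (n + 1), ((n.choose k ^ 3 * k ^ 2 : ℕ) : ℤ) := by
  rw [franelMoment, franel, Nat.cast_sum, mul_sum, mul_sum, ← sum_sub_distrib]
  push_cast
  exact sum_congr rfl fun _ _ => by ring

theorem three_mul_franelMoment_succ (s : ℕ) :
    3 * franelMoment (s + 1) = (s + 1) ^ 2 * (franel (s + 1) - 8 * franel s) := by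
  have hsucc := congrArg (Nat.cast : ℕ → ℤ) (franel_succ s)
  have hmom := congrArg (Nat.cast : ℕ → ℤ) (sum_choose_cube_mul_sq s)
  push_cast at hsucc hmom
  rw [franelMoment_eq, show s + 1 + 1 = s + 2 from rfl]
  push_cast
  linear_combination 2 * ((s : ℤ) + 1) ^ 2 * hsucc - 12 * hmom

theorem franelMoment_succ_add (n : ℕ) :
    franelMoment (n + 1) + franelMoment n + (3 * n + 2) * franel n = 0 := by
  rcases n with _ | s
  · decide
  · have hrec := congrArg (Nat.cast : ℕ → ℤ) (franel_recurrence s)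
    push_cast at hrec
    have hW₂ := three_mul_franelMoment_succ (s + 1)
    have hW₁ := three_mul_franelMoment_succ s
    push_cast at hW₂ hW₁ ⊢
    linarith

theorem sum_alternating_franel (n : ℕ) :
    ∑ k ∈ range n, (3 * k + 2) * (-1) ^ k * (franel k : ℤ) = (-1) ^ n * franelMoment n := by
  induction n with
  | zero => simp [franelMoment]
  | succ m ih =>
    rw [sum_range_succ, ih, pow_succ]
    linear_combination (-1) ^ m * franelMoment_succ_add m

theorem franelMoment_eq_add_sum_Icc (n : ℕ) :
    franelMoment n = n ^ 2 + ∑ k ∈ Icc 1 n, (n.choose k : ℤ) ^ 3 * (n ^ 2 - 4 * k ^ 2) := by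
  rw [franelMoment, Nat.range_succ_eq_Icc_zero, ← insert_Icc_add_one_left_eq_Icc n.zero_le,
    sum_insert (by simp)]
  simp

theorem mul_sum_Icc_choose_pred_cube {n : ℕ} (hn : 0 < n) :
    (n : ℚ) * ∑ k ∈ Icc 1 n,
        ((n - 1).choose (k - 1) : ℚ) ^ 3 * (((n : ℚ) ^ 2 - 4 * (k : ℚ) ^ 2) / (k : ℚ) ^ 3) =
      (franelMoment n - n ^ 2) / n ^ 2 := by
  have hterm (k : ℕ) (hk : k ∈ Icc 1 n) :
      (n : ℚ) * (((n - 1).choose (k - 1) : ℚ) ^ 3 * (((n : ℚ) ^ 2 - 4 * (k : ℚ) ^ 2) / (k : ℚ) ^ 3)) =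
        (n.choose k : ℚ) ^ 3 * (n ^ 2 - 4 * k ^ 2) / n ^ 2 := by
    have hk : 1 ≤ k := (mem_Icc.1 hk).1
    have h := Nat.add_one_mul_choose_eq (n - 1) (k - 1)
    rw [Nat.sub_add_cancel hn, Nat.sub_add_cancel hk] at h
    have h' : (n : ℚ) * (n - 1).choose (k - 1) = n.choose k * k := by exact_mod_cast h
    have : (k : ℚ) ≠ 0 := by positivity
    field_simp
    linear_combination (n ^ 2 - 4 * k ^ 2 : ℚ) * ((n : ℚ) ^ 2 * ((n - 1).choose (k - 1)) ^ 2
      + n * (n - 1).choose (k - 1) * (n.choose k * k) + (n.choose k * k) ^ 2) * h'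
  rw [mul_sum, sum_congr rfl hterm, ← sum_div, franelMoment_eq_add_sum_Icc]
  push_cast
  ring

theorem franel_sum_identity (n : ℕ) (hn : 0 < n) :
    (-1 : ℚ) ^ n / (n : ℚ) ^ 2 *
        ∑ k ∈ Finset.range n, (3 * (k : ℚ) + 2) * (-1 : ℚ) ^ k * (franel k : ℚ) =
      (n : ℚ) * ∑ k ∈ Finset.Icc 1 n,
          ((n - 1).choose (k - 1) : ℚ) ^ 3 * (((n : ℚ) ^ 2 - 4 * (k : ℚ) ^ 2) / (k : ℚ) ^ 3)
        + 1 := by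
  have halt := congrArg (Int.cast : ℤ → ℚ) (sum_alternating_franel n)
  push_cast at halt
  have hsq : ((-1 : ℚ) ^ n) ^ 2 = 1 := by rw [← pow_mul, pow_mul', neg_one_sq, one_pow]
  have : (n : ℚ) ≠ 0 := by positivity
  rw [halt, mul_sum_Icc_choose_pred_cube hn]
  field_simp
  linear_combination (franelMoment n : ℚ) * hsq
end

section
/- Let p be a prime, and let n, k, r be positive integers. Then \binom{p^r n - 1}{k} \equiv \binom{p^{r-1} n - 1}{\lfloor k/p \rfloor} (-1)^{k - \lfloor k/p \rfloor} \left(1 - n p^r \sum_{j=1, p \nmid j}^{k} \frac{1}{j}\right) \pmod{p^{2r}}. -/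
/-!
Write `N = p^r n`, so that `C(N - 1, k) = ∏_{j ≤ k} (N - j) / j`. The factors with `j = p m`
equal `(N/p - m) / m` and multiply to `C(N/p - 1, ⌊k/p⌋)`. Each of the other `k - ⌊k/p⌋` factors
is `-(1 - N/j)` with `‖N/j‖_p ≤ p^{-r}`, and in an ultrametric ring a product of factors `1 - xᵢ`
with `‖xᵢ‖ ≤ ε ≤ 1` agrees with `1 - ∑ xᵢ` up to `ε²`.
-/

open Finset

theorem Nat.cast_choose_eq_prod_Icc {K : Type*} [Field K] [CharZero K] (a k : ℕ) :
    (a.choose k : K) = ∏ j ∈ Icc 1 k, ((a : K) + 1 - j) / j := by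
  rw [Nat.cast_choose_eq_descPochhammer_div, descPochhammer_eval_eq_prod_range,
    ← Finset.prod_range_add_one_eq_factorial, Nat.cast_prod, ← prod_div_distrib,
    ← Ico_add_one_right_eq_Icc, ← zero_add 1, ← prod_Ico_add', zero_add, ← range_eq_Ico]
  refine prod_congr rfl fun j _ => ?_
  push_cast
  ring

theorem Nat.Icc_filter_dvd_eq_image {p : ℕ} (hp : 0 < p) (k : ℕ) :
    {j ∈ Icc 1 k | p ∣ j} = (Icc 1 (k / p)).image (p * ·) := by
  ext j
  simp only [mem_filter, mem_Icc, mem_image, Nat.le_div_iff_mul_le hp]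
  constructor
  · rintro ⟨⟨hj, hjk⟩, m, rfl⟩
    exact ⟨m, ⟨Nat.pos_of_mul_pos_left hj, by linarith⟩, rfl⟩
  · rintro ⟨m, ⟨hm, hmk⟩, rfl⟩
    exact ⟨⟨Nat.mul_pos hp hm, by linarith⟩, m, rfl⟩

theorem Nat.card_Icc_filter_not_dvd {p : ℕ} (hp : 0 < p) (k : ℕ) :
    #{j ∈ Icc 1 k | ¬ p ∣ j} = k - k / p := by
  rw [filter_not, card_sdiff_of_subset (filter_subset _ _), Nat.Icc_filter_dvd_eq_image hp,
    Finset.card_image_of_injective _ (mul_right_injective₀ hp.ne'), Nat.card_Icc, Nat.card_Icc,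
    Nat.add_sub_cancel, Nat.add_sub_cancel]

theorem Nat.cast_choose_mul_sub_one_eq_mul_prod {K : Type*} [Field K] [CharZero K] {p M : ℕ}
    (hp : 0 < p) (hM : 0 < M) (k : ℕ) :
    ((p * M - 1).choose k : K) =
      ((M - 1).choose (k / p) : K) * ∏ j ∈ Icc 1 k with ¬ p ∣ j, ((p * M : ℕ) - j : K) / j := by
  have hcast {N : ℕ} (hN : 0 < N) : ((N - 1 : ℕ) : K) + 1 = N := by
    rw [Nat.cast_sub hN, Nat.cast_one, sub_add_cancel]
  rw [Nat.cast_choose_eq_prod_Icc, Nat.cast_choose_eq_prod_Icc, hcast (Nat.mul_pos hp hM),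
    hcast hM, ← prod_filter_mul_prod_filter_not (Icc 1 k) (p ∣ ·), Nat.Icc_filter_dvd_eq_image hp,
    prod_image fun a _ b _ h => Nat.eq_of_mul_eq_mul_left hp h]
  congr 1
  refine prod_congr rfl fun m _ => ?_
  have hp' : (p : K) ≠ 0 := Nat.cast_ne_zero.mpr hp.ne'
  push_cast
  rw [← mul_sub, mul_div_mul_left _ _ hp']

theorem Nat.cast_choose_mul_sub_one_eq_prod_one_sub {K : Type*} [Field K] [CharZero K] {p M : ℕ}
    (hp : 0 < p) (hM : 0 < M) (k : ℕ) :
    ((p * M - 1).choose k : K) = ((M - 1).choose (k / p) : K) * (-1) ^ (k - k / p) *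
      ∏ j ∈ Icc 1 k with ¬ p ∣ j, (1 - ((p * M : ℕ) : K) * (j : K)⁻¹) := by
  rw [Nat.cast_choose_mul_sub_one_eq_mul_prod hp hM, mul_assoc, ← Nat.card_Icc_filter_not_dvd hp,
    ← prod_const, ← prod_mul_distrib]
  congr 1
  refine prod_congr rfl fun j hj => ?_
  have hj0 : (j : K) ≠ 0 := Nat.cast_ne_zero.mpr (by grind)
  field_simp
  ring

section Ultrametric

variable {ι R : Type*} [SeminormedCommRing R] [IsUltrametricDist R] {s : Finset ι} {x : ι → R}
  {ε : ℝ}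

theorem norm_prod_one_sub_sub_one_le (hε₀ : 0 ≤ ε) (hε₁ : ε ≤ 1)
    (hx : ∀ i ∈ s, ‖x i‖ ≤ ε) : ‖∏ i ∈ s, (1 - x i) - 1‖ ≤ ε := by
  induction s using Finset.cons_induction with
  | empty => simpa using hε₀
  | cons a s _ ih =>
    rw [forall_mem_cons] at hx
    have hP := ih hx.2
    rw [prod_cons, show (1 - x a) * ∏ i ∈ s, (1 - x i) - 1 =
      (∏ i ∈ s, (1 - x i) - 1) + -x a * (∏ i ∈ s, (1 - x i) - 1) + -x a by ring]
    refine (IsUltrametricDist.norm_add_le_max _ _).trans (max_le ?_ ((norm_neg _).trans_le hx.1))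
    refine (IsUltrametricDist.norm_add_le_max _ _).trans (max_le hP ?_)
    calc ‖-x a * (∏ i ∈ s, (1 - x i) - 1)‖ ≤ ‖x a‖ * ‖∏ i ∈ s, (1 - x i) - 1‖ := by
          simpa only [norm_neg] using norm_mul_le (-x a) _
      _ ≤ 1 * ε := mul_le_mul (hx.1.trans hε₁) hP (norm_nonneg _) zero_le_one
      _ = ε := one_mul ε

theorem norm_prod_one_sub_sub_one_sub_sum_le (hε₀ : 0 ≤ ε) (hε₁ : ε ≤ 1)
    (hx : ∀ i ∈ s, ‖x i‖ ≤ ε) :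
    ‖∏ i ∈ s, (1 - x i) - (1 - ∑ i ∈ s, x i)‖ ≤ ε ^ 2 := by
  induction s using Finset.cons_induction with
  | empty => simpa using sq_nonneg ε
  | cons a s _ ih =>
    have hP := norm_prod_one_sub_sub_one_le hε₀ hε₁ fun i hi => hx i (mem_cons_of_mem hi)
    rw [forall_mem_cons] at hx
    rw [prod_cons, sum_cons, show (1 - x a) * ∏ i ∈ s, (1 - x i) - (1 - (x a + ∑ i ∈ s, x i)) =
      (∏ i ∈ s, (1 - x i) - (1 - ∑ i ∈ s, x i)) + -x a * (∏ i ∈ s, (1 - x i) - 1) by ring]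
    refine (IsUltrametricDist.norm_add_le_max _ _).trans (max_le (ih hx.2) ?_)
    calc ‖-x a * (∏ i ∈ s, (1 - x i) - 1)‖ ≤ ‖x a‖ * ‖∏ i ∈ s, (1 - x i) - 1‖ := by
          simpa only [norm_neg] using norm_mul_le (-x a) _
      _ ≤ ε * ε := mul_le_mul hx.1 hP (norm_nonneg _) hε₀
      _ = ε ^ 2 := (sq ε).symm

end Ultrametric

theorem Padic.norm_natCast_le_one {p : ℕ} [Fact p.Prime] (n : ℕ) : ‖(n : ℚ_[p])‖ ≤ 1 := by
  simpa using Padic.norm_int_le_one (p := p) n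

theorem Padic.norm_natCast_pow_mul_mul_inv_le {p : ℕ} [Fact p.Prime] (r n : ℕ) {j : ℕ}
    (hj : ¬ p ∣ j) : ‖((p ^ r * n : ℕ) : ℚ_[p]) * (j : ℚ_[p])⁻¹‖ ≤ (p : ℝ) ^ (-(r : ℤ)) := by
  have hj : ‖(j : ℚ_[p])‖ = 1 :=
    Padic.norm_natCast_eq_one_iff.mpr ((Fact.out : p.Prime).coprime_iff_not_dvd.mpr hj)
  rw [norm_mul, norm_inv, hj, inv_one, mul_one, Nat.cast_mul, Nat.cast_pow, norm_mul,
    Padic.norm_p_pow]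
  exact mul_le_of_le_one_right (by positivity) (Padic.norm_natCast_le_one n)

theorem beukers_binom_congruence_general (p : ℕ) [Fact p.Prime] (n k r : ℕ)
    (hn : 0 < n) (hr : 0 < r) :
    ‖(((p ^ r * n - 1).choose k : ℚ_[p]) -
        ((p ^ (r - 1) * n - 1).choose (k / p) : ℚ_[p]) * (-1) ^ (k - k / p) *
          (1 - (n : ℚ_[p]) * (p : ℚ_[p]) ^ r *
            ∑ j ∈ (Finset.Icc 1 k).filter (fun j => ¬ p ∣ j), ((j : ℚ_[p]))⁻¹))‖ ≤
      (p : ℝ) ^ (-(2 * (r : ℤ))) := by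
  have hp : 0 < p := (Fact.out : p.Prime).pos
  set x : ℕ → ℚ_[p] := fun j => ((p ^ r * n : ℕ) : ℚ_[p]) * (j : ℚ_[p])⁻¹
  have hchoose := Nat.cast_choose_mul_sub_one_eq_prod_one_sub (K := ℚ_[p]) hp
    (Nat.mul_pos (pow_pos hp (r - 1)) hn) k
  rw [← mul_assoc, ← pow_succ', Nat.sub_add_cancel hr] at hchoose
  have hsum : (n : ℚ_[p]) * (p : ℚ_[p]) ^ r * ∑ j ∈ Icc 1 k with ¬ p ∣ j, (j : ℚ_[p])⁻¹ =
      ∑ j ∈ Icc 1 k with ¬ p ∣ j, x j := by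
    rw [mul_sum]
    exact sum_congr rfl fun j _ => by push_cast [x]; ring
  have hε₁ : (p : ℝ) ^ (-(r : ℤ)) ≤ 1 :=
    zpow_le_one_of_nonpos₀ (by exact_mod_cast hp) (by omega)
  have hx (j : ℕ) (hj : j ∈ {j ∈ Icc 1 k | ¬ p ∣ j}) : ‖x j‖ ≤ (p : ℝ) ^ (-(r : ℤ)) :=
    Padic.norm_natCast_pow_mul_mul_inv_le r n (mem_filter.mp hj).2
  have hε : ((p : ℝ) ^ (-(r : ℤ))) ^ 2 = (p : ℝ) ^ (-(2 * (r : ℤ))) := by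
    rw [← zpow_natCast, ← zpow_mul]
    ring_nf
  rw [hchoose, hsum, ← mul_sub, norm_mul, norm_mul, norm_pow, norm_neg, norm_one, one_pow,
    mul_one, ← hε]
  exact (mul_le_of_le_one_left (norm_nonneg _) (Padic.norm_natCast_le_one _)).trans
    (norm_prod_one_sub_sub_one_sub_sum_le (by positivity) hε₁ hx)

/-- Beukers' lemma: `C(p^r n - 1, k) ≡ C(p^{r-1} n - 1, ⌊k/p⌋) (-1)^{k-⌊k/p⌋}
(1 - n p^r ∑_{1≤j≤k, p∤j} 1/j)  (mod p^{2r})`, as a congruence in `ℚ_p` among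
`p`-integral numbers. -/
theorem beukers_binom_congruence (p : ℕ) [Fact p.Prime] (n k r : ℕ)
    (hn : 0 < n) (hk : 0 < k) (hr : 0 < r) :
    ‖(((p ^ r * n - 1).choose k : ℚ_[p]) -
        ((p ^ (r - 1) * n - 1).choose (k / p) : ℚ_[p]) * (-1) ^ (k - k / p) *
          (1 - (n : ℚ_[p]) * (p : ℚ_[p]) ^ r *
            ∑ j ∈ (Finset.Icc 1 k).filter (fun j => ¬ p ∣ j), ((j : ℚ_[p]))⁻¹))‖ ≤
      (p : ℝ) ^ (-(2 * (r : ℤ))) :=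
  beukers_binom_congruence_general p n k r hn hr
end

section
/- Let p be a prime and let n be an integer not divisible by p-1. Then for all integers r ≥ 0, \sum_{k=1, p \nmid k}^{p^r - 1} k^n \equiv 0 \pmod{p^r}, where for negative n the terms k^n are p-integral rationals. -/
/-!
Reduced modulo `p ^ r`, the sum becomes `∑ u ∈ (ℤ/p^r)ˣ, u ^ n`. Lift a generator of `(ℤ/p)ˣ` to
a unit `g` of `ℤ/p^r`: multiplication by `g` permutes the units, so `(g ^ n - 1) * S = 0`, and since
`p - 1 ∤ n`, `g ^ n ≢ 1 (mod p)`, so `g ^ n - 1` is a unit and `S = 0`.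
-/

open Finset

theorem sum_eq_zero_of_isUnit_sub_one {G R : Type*} [Group G] [Fintype G] [CommRing R]
    (χ : G →* R) {g : G} (hg : IsUnit (χ g - 1)) : ∑ x, χ x = 0 := by
  have hinv : χ g * ∑ x, χ x = ∑ x, χ x := by
    simp only [mul_sum, ← map_mul]
    exact Fintype.sum_equiv (Equiv.mulLeft g) _ _ fun _ => rfl
  exact hg.mul_right_eq_zero.mp (by linear_combination hinv)

theorem IsCyclic.exists_zpow_ne_one {G : Type*} [Group G] [IsCyclic G] {n : ℤ}
    (hn : ¬ (Nat.card G : ℤ) ∣ n) : ∃ g : G, g ^ n ≠ 1 := by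
  by_contra! h
  exact hn (IsCyclic.exponent_eq_card (α := G) ▸ Group.exponent_dvd_iff_forall_zpow_eq_one.mpr h)

namespace ZMod

variable {p r : ℕ}

theorem isUnit_of_cast_ne_zero (hp : p.Prime) (hr : 0 < r) {x : ZMod (p ^ r)}
    (hx : (x.cast : ZMod p) ≠ 0) : IsUnit x := by
  have : NeZero (p ^ r) := ⟨pow_ne_zero _ hp.ne_zero⟩
  rw [← natCast_zmod_val x, isUnit_natCast_iff_not_dvd_pow hp hr, ← natCast_eq_zero_iff]
  rwa [cast_eq_val] at hx

theorem not_dvd_val_unit (hp : p.Prime) (hr : 0 < r) (u : (ZMod (p ^ r))ˣ) :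
    ¬ p ∣ (u : ZMod (p ^ r)).val := by
  have : NeZero (p ^ r) := ⟨pow_ne_zero _ hp.ne_zero⟩
  rw [← isUnit_natCast_iff_not_dvd_pow hp hr, natCast_zmod_val]
  exact u.isUnit

variable [Fact p.Prime]

theorem filter_not_dvd_eq_image_val_units (hr : 0 < r) :
    (Icc 1 (p ^ r - 1)).filter (fun k => ¬ p ∣ k) =
      univ.image fun u : (ZMod (p ^ r))ˣ => (u : ZMod (p ^ r)).val := by
  have hp : p.Prime := Fact.out
  ext k
  simp only [mem_filter, mem_Icc, mem_image, mem_univ, true_and]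
  constructor
  · rintro ⟨⟨hk1, hkr⟩, hpk⟩
    refine ⟨unitOfCoprime k ((hp.coprime_iff_not_dvd.mpr hpk).symm.pow_right r), ?_⟩
    rw [coe_unitOfCoprime, val_natCast_of_lt (by omega)]
  · rintro ⟨u, rfl⟩
    have hpu := not_dvd_val_unit hp hr u
    have hlt := val_lt (u : ZMod (p ^ r))
    have hne : (u : ZMod (p ^ r)).val ≠ 0 := fun h => hpu (h ▸ dvd_zero p)
    exact ⟨⟨by omega, by omega⟩, hpu⟩

variable {n : ℤ}

theorem exists_isUnit_zpow_sub_one (hn : ¬ ((p : ℤ) - 1) ∣ n) (hr : 0 < r) :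
    ∃ g : (ZMod (p ^ r))ˣ, IsUnit (((g ^ n : (ZMod (p ^ r))ˣ) : ZMod (p ^ r)) - 1) := by
  have hp := (Fact.out : p.Prime)
  have hpr : p ∣ p ^ r := dvd_pow_self p hr.ne'
  obtain ⟨u, hu⟩ : ∃ u : (ZMod p)ˣ, u ^ n ≠ 1 := by
    apply IsCyclic.exists_zpow_ne_one
    rwa [Nat.card_eq_fintype_card, card_units, Nat.cast_sub hp.one_le, Nat.cast_one]
  obtain ⟨g, rfl⟩ := unitsMap_surjective hpr u
  refine ⟨g, isUnit_of_cast_ne_zero hp hr ?_⟩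
  rwa [cast_sub hpr, cast_one hpr, sub_ne_zero, ← unitsMap_val, map_zpow, Ne, Units.val_eq_one]

theorem sum_units_zpow_eq_zero (hn : ¬ ((p : ℤ) - 1) ∣ n) (hr : 0 < r) :
    ∑ u : (ZMod (p ^ r))ˣ, ((u ^ n : (ZMod (p ^ r))ˣ) : ZMod (p ^ r)) = 0 :=
  let ⟨_, hg⟩ := exists_isUnit_zpow_sub_one hn hr
  sum_eq_zero_of_isUnit_sub_one ((Units.coeHom (ZMod (p ^ r))).comp (zpowGroupHom n)) hg

end ZMod

namespace PadicInt

variable {p : ℕ} [Fact p.Prime] {r : ℕ}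

theorem norm_le_pow_of_toZModPow_eq_zero {x : ℤ_[p]} (hx : toZModPow r x = 0) :
    ‖(x : ℚ_[p])‖ ≤ (p : ℝ) ^ (-(r : ℤ)) := by
  rw [← norm_def, norm_le_pow_iff_mem_span_pow, ← ker_toZModPow]
  exact hx

theorem norm_natCast_val_unit (hr : 0 < r) (u : (ZMod (p ^ r))ˣ) :
    ‖((u : ZMod (p ^ r)).val : ℚ_[p])‖ = 1 := by
  rw [Padic.norm_natCast_eq_one_iff, Nat.Prime.coprime_iff_not_dvd Fact.out]
  exact ZMod.not_dvd_val_unit Fact.out hr u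

noncomputable def liftUnit (hr : 0 < r) (u : (ZMod (p ^ r))ˣ) : ℤ_[p]ˣ :=
  mkUnits (norm_natCast_val_unit hr u)

theorem coe_liftUnit_zpow (hr : 0 < r) (u : (ZMod (p ^ r))ˣ) (n : ℤ) :
    (((liftUnit hr u ^ n : ℤ_[p]ˣ) : ℤ_[p]) : ℚ_[p]) = ((u : ZMod (p ^ r)).val : ℚ_[p]) ^ n := by
  have := congrArg Units.val
    (map_zpow (Units.map (Coe.ringHom (p := p)).toMonoidHom) (liftUnit hr u) n)
  rwa [Units.val_zpow_eq_zpow_val] at this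

theorem toZModPow_liftUnit_zpow (hr : 0 < r) (u : (ZMod (p ^ r))ˣ) (n : ℤ) :
    toZModPow r ((liftUnit hr u ^ n : ℤ_[p]ˣ) : ℤ_[p]) =
      ((u ^ n : (ZMod (p ^ r))ˣ) : ZMod (p ^ r)) := by
  have hu : Units.map (toZModPow r : ℤ_[p] →+* ZMod (p ^ r)).toMonoidHom (liftUnit hr u) = u := by
    ext
    change toZModPow r (((u : ZMod (p ^ r)).val : ℕ) : ℤ_[p]) = u
    rw [map_natCast, ZMod.natCast_zmod_val]
  have := congrArg Units.val
    (map_zpow (Units.map (toZModPow r : ℤ_[p] →+* ZMod (p ^ r)).toMonoidHom) (liftUnit hr u) n)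
  rwa [hu] at this

end PadicInt

theorem sum_zpow_congruence (p : ℕ) [Fact p.Prime] (n : ℤ)
    (hn : ¬ ((p : ℤ) - 1) ∣ n) (r : ℕ) :
    ‖∑ k ∈ (Finset.Icc 1 (p ^ r - 1)).filter (fun k => ¬ p ∣ k), ((k : ℚ_[p])) ^ n‖ ≤
      (p : ℝ) ^ (-(r : ℤ)) := by
  rcases r.eq_zero_or_pos with rfl | hr
  · simp
  rw [ZMod.filter_not_dvd_eq_image_val_units hr,
    sum_image fun u _ v _ h => Units.ext (ZMod.val_injective _ h)]
  simp_rw [← PadicInt.coe_liftUnit_zpow hr, ← PadicInt.coe_sum]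
  apply PadicInt.norm_le_pow_of_toZModPow_eq_zero
  simp_rw [map_sum, PadicInt.toZModPow_liftUnit_zpow]
  exact ZMod.sum_units_zpow_eq_zero hn hr
end

section
/- Let p ≥ 5 be a prime, r a positive integer, and l a nonnegative integer. Then \sum_{k : \lfloor k/p^r \rfloor = l, \ p \nmid (2k+1)} \frac{1}{2k+1} \equiv 0 \pmod{p^{2r}}. -/
/-!
The involution `k ↦ (2l+1)p^r - 1 - k` of the block pairs `2k+1` with `2(2l+1)p^r - (2k+1)`,
so twice the sum is `2(2l+1)p^r · ∑ 1/((2k+1)(2k'+1))`. Modulo `p^r` the last sum is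
`-∑ u⁻²` over the units `u` of `ℤ/p^r`, which vanishes: multiplying by `2` permutes the units
and `2² - 1 = 3` is a unit since `p ≥ 5`. Each of the two factors thus contributes `p^r`.
-/

open Finset

theorem Fintype.sum_ite_isUnit {R M : Type*} [Monoid R] [Fintype R] [DecidableEq R]
    [DecidablePred (IsUnit : R → Prop)] [AddCommMonoid M] (f : R → M) :
    ∑ x : R, (if IsUnit x then f x else 0) = ∑ u : Rˣ, f u := by
  rw [← sum_filter]
  symm
  refine sum_nbij (fun u => (u : R)) (by simp) (fun u _ v _ h => Units.ext h) ?_ fun _ _ => rfl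
  rintro x hx
  obtain ⟨u, rfl⟩ := (mem_filter.mp hx).2
  exact ⟨u, mem_univ _, rfl⟩

theorem ZMod.sum_Ico_natCast {M : Type*} [AddCommMonoid M] (n : ℕ) [NeZero n] (a : ℕ)
    (f : ZMod n → M) : ∑ k ∈ Ico a (a + n), f k = ∑ x : ZMod n, f x := by
  refine sum_nbij' (fun k => (k : ZMod n)) (fun x => a + (x - a).val) (by simp) ?_ ?_ ?_
    fun _ _ => rfl
  · intro x _
    simp [ZMod.val_lt]
  · intro k hk
    obtain ⟨hak, hkn⟩ := mem_Ico.mp hk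
    have : ((k : ZMod n) - a) = ((k - a : ℕ) : ZMod n) := by push_cast [Nat.cast_sub hak]; ring
    simp only [this, ZMod.val_natCast]
    rw [Nat.mod_eq_of_lt (by omega)]
    omega
  · intro x _
    simp

theorem sum_units_pow_eq_zero {R : Type*} [CommRing R] [Fintype Rˣ] (g : Rˣ) (n : ℕ)
    (hg : IsUnit ((g : R) ^ n - 1)) : ∑ u : Rˣ, (u : R) ^ n = 0 := by
  have hmul : ∑ u : Rˣ, ((g * u : Rˣ) : R) ^ n = ∑ u : Rˣ, (u : R) ^ n :=
    Fintype.sum_equiv (Equiv.mulLeft g) _ _ fun _ => rfl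
  simp only [Units.val_mul, mul_pow, ← mul_sum] at hmul
  exact hg.mul_right_eq_zero.mp (by linear_combination hmul)

theorem Finset.two_mul_sum_inv_eq_mul_sum_inv_mul {K ι : Type*} [Field K] {s : Finset ι}
    (σ : ι → ι) (hσ : ∀ i ∈ s, σ i ∈ s) (hσσ : ∀ i ∈ s, σ (σ i) = i) {a : ι → K}
    (ha : ∀ i ∈ s, a i ≠ 0) {M : K} (hM : ∀ i ∈ s, a i + a (σ i) = M) :
    2 * ∑ i ∈ s, (a i)⁻¹ = M * ∑ i ∈ s, (a i * a (σ i))⁻¹ := by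
  have hreflect : ∑ i ∈ s, (a (σ i))⁻¹ = ∑ i ∈ s, (a i)⁻¹ :=
    sum_nbij' σ σ hσ hσ hσσ hσσ fun _ _ => rfl
  rw [two_mul]
  nth_rw 2 [← hreflect]
  rw [← sum_add_distrib, mul_sum]
  refine sum_congr rfl fun i hi => ?_
  rw [inv_add_inv (ha i hi) (ha _ (hσ i hi)), hM i hi, div_eq_mul_inv]

section Padic

variable {p : ℕ} [Fact p.Prime]

theorem Padic.norm_sum_inv_natCast_le {ι : Type*} {s : Finset ι} {n : ι → ℕ}
    (hn : ∀ i ∈ s, p.Coprime (n i)) {m : ℕ} (h : ∑ i ∈ s, (n i : ZMod (p ^ m))⁻¹ = 0) :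
    ‖∑ i ∈ s, (n i : ℚ_[p])⁻¹‖ ≤ (p : ℝ) ^ (-m : ℤ) := by
  have hnorm : ∀ i ∈ s, ‖(n i : ℤ_[p])‖ = 1 := fun i hi =>
    PadicInt.norm_natCast_eq_one_iff.mpr (hn i hi)
  set z : ℤ_[p] := ∑ i ∈ s, (n i : ℤ_[p]).inv
  have hcoe : (z : ℚ_[p]) = ∑ i ∈ s, (n i : ℚ_[p])⁻¹ := by
    rw [PadicInt.coe_sum]
    refine sum_congr rfl fun i hi => eq_inv_of_mul_eq_one_left ?_
    simpa using congrArg ((↑) : ℤ_[p] → ℚ_[p]) (PadicInt.inv_mul (hnorm i hi))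
  have hz : PadicInt.toZModPow m z = 0 := by
    rw [map_sum, ← h]
    refine sum_congr rfl fun i hi => (ZMod.inv_eq_of_mul_eq_one _ _ _ ?_).symm
    rw [← map_natCast (PadicInt.toZModPow m), ← map_mul, PadicInt.mul_inv (hnorm i hi), map_one]
  rw [← hcoe, ← PadicInt.norm_def, PadicInt.norm_le_pow_iff_mem_span_pow,
    ← PadicInt.ker_toZModPow]
  exact hz

end Padic

def oddBlock (p q l : ℕ) : Finset ℕ :=
  (Ico (l * q) ((l + 1) * q)).filter fun k => ¬ p ∣ 2 * k + 1

section oddBlock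

variable {p q l k : ℕ}

theorem two_mul_add_one_add_reflect (hk : k ∈ Ico (l * q) ((l + 1) * q)) :
    2 * k + 1 + (2 * ((2 * l + 1) * q - 1 - k) + 1) = 2 * ((2 * l + 1) * q) := by
  have := mem_Ico.mp hk
  have : (l + 1) * q = l * q + q := by ring
  have : (2 * l + 1) * q = 2 * (l * q) + q := by ring
  omega

theorem reflect_reflect (hk : k ∈ Ico (l * q) ((l + 1) * q)) :
    (2 * l + 1) * q - 1 - ((2 * l + 1) * q - 1 - k) = k := by
  have := two_mul_add_one_add_reflect hk
  omega

theorem reflect_mem_oddBlock (hpq : p ∣ q) (hk : k ∈ oddBlock p q l) :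
    (2 * l + 1) * q - 1 - k ∈ oddBlock p q l := by
  obtain ⟨hkI, hkp⟩ := mem_filter.mp hk
  have hsum := two_mul_add_one_add_reflect hkI
  refine mem_filter.mpr ⟨?_, fun h => hkp ?_⟩
  · have := mem_Ico.mp hkI
    have : (l + 1) * q = l * q + q := by ring
    have : (2 * l + 1) * q = 2 * (l * q) + q := by ring
    rw [mem_Ico]
    omega
  · exact (Nat.dvd_add_left h).mp (hsum ▸ (hpq.mul_left _).mul_left 2)

end oddBlock

section PrimePower

variable {p r : ℕ} [hp : Fact p.Prime]

theorem ZMod.isUnit_natCast_primePow_iff (hr : 0 < r) {m : ℕ} :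
    IsUnit (m : ZMod (p ^ r)) ↔ ¬ p ∣ m := by
  rw [ZMod.isUnit_iff_coprime, Nat.coprime_pow_right_iff hr, Nat.coprime_comm,
    hp.out.coprime_iff_not_dvd]

theorem ZMod.isUnit_natCast_primePow_of_prime (hr : 0 < r) {m : ℕ} (hm : m.Prime)
    (hmp : m ≠ p) :
    IsUnit (m : ZMod (p ^ r)) :=
  (ZMod.isUnit_natCast_primePow_iff hr).mpr fun h =>
    hmp ((Nat.prime_dvd_prime_iff_eq hp.out hm).mp h).symm

theorem sum_oddBlock_eq_sum_units {M : Type*} [AddCommMonoid M] (hp2 : p ≠ 2) (hr : 0 < r)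
    (l : ℕ) (f : ZMod (p ^ r) → M) :
    ∑ k ∈ oddBlock p (p ^ r) l, f ((2 * k + 1 : ℕ) : ZMod (p ^ r)) =
      ∑ u : (ZMod (p ^ r))ˣ, f u := by
  classical
  have h2 : IsUnit (2 : ZMod (p ^ r)) := by
    simpa using ZMod.isUnit_natCast_primePow_of_prime hr Nat.prime_two hp2.symm
  have hbij : Function.Bijective fun x : ZMod (p ^ r) => 2 * x + 1 :=
    (Equiv.addRight 1).bijective.comp (IsUnit.isUnit_iff_mulLeft_bijective.mp h2)
  calc ∑ k ∈ oddBlock p (p ^ r) l, f ((2 * k + 1 : ℕ) : ZMod (p ^ r))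
      = ∑ k ∈ Ico (l * p ^ r) (l * p ^ r + p ^ r), if IsUnit (2 * (k : ZMod (p ^ r)) + 1)
          then f (2 * k + 1) else 0 := by
        rw [oddBlock, sum_filter, add_one_mul]
        refine sum_congr rfl fun k _ => ?_
        simp only [← ZMod.isUnit_natCast_primePow_iff hr, Nat.cast_add, Nat.cast_mul,
          Nat.cast_ofNat, Nat.cast_one]
    _ = ∑ x : ZMod (p ^ r), if IsUnit (2 * x + 1) then f (2 * x + 1) else 0 :=
        ZMod.sum_Ico_natCast _ _ fun x => if IsUnit (2 * x + 1) then f (2 * x + 1) else 0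
    _ = ∑ x : ZMod (p ^ r), if IsUnit x then f x else 0 :=
        Fintype.sum_bijective _ hbij _ _ fun _ => rfl
    _ = ∑ u : (ZMod (p ^ r))ˣ, f u := Fintype.sum_ite_isUnit f

theorem sum_inv_mul_reflect_oddBlock_eq_zero (hp2 : p ≠ 2) (hp3 : p ≠ 3) (hr : 0 < r)
    (l : ℕ) :
    ∑ k ∈ oddBlock p (p ^ r) l,
      (((2 * k + 1) * (2 * ((2 * l + 1) * p ^ r - 1 - k) + 1) : ℕ) : ZMod (p ^ r))⁻¹ = 0 := by
  have hreflect : ∀ k ∈ oddBlock p (p ^ r) l,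
      (((2 * k + 1) * (2 * ((2 * l + 1) * p ^ r - 1 - k) + 1) : ℕ) : ZMod (p ^ r))
        = -((2 * k + 1 : ℕ) : ZMod (p ^ r)) ^ 2 := by
    intro k hk
    have hsum := congrArg (Nat.cast : ℕ → ZMod (p ^ r))
      (two_mul_add_one_add_reflect (mem_filter.mp hk).1)
    rw [Nat.cast_add, Nat.cast_mul 2 (_ * _), Nat.cast_mul _ (p ^ r), ZMod.natCast_self,
      mul_zero, mul_zero] at hsum
    rw [Nat.cast_mul, eq_neg_of_add_eq_zero_right hsum]
    ring
  rw [sum_congr rfl fun k hk => congrArg Inv.inv (hreflect k hk),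
    sum_oddBlock_eq_sum_units hp2 hr l fun x => (-x ^ 2)⁻¹]
  have hinv : ∀ u : (ZMod (p ^ r))ˣ,
      (-(u : ZMod (p ^ r)) ^ 2)⁻¹ = -((u⁻¹ : (ZMod (p ^ r))ˣ) : ZMod (p ^ r)) ^ 2 := fun u =>
    ZMod.inv_eq_of_mul_eq_one _ _ _ (by rw [neg_mul_neg, ← mul_pow, Units.mul_inv, one_pow])
  have h2 := ZMod.isUnit_natCast_primePow_of_prime hr Nat.prime_two hp2.symm
  have h3 : IsUnit ((h2.unit : ZMod (p ^ r)) ^ 2 - 1) := by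
    simpa [show (2 : ZMod (p ^ r)) ^ 2 - 1 = 3 by norm_num] using
      ZMod.isUnit_natCast_primePow_of_prime hr Nat.prime_three hp3.symm
  simp only [hinv, sum_neg_distrib, neg_eq_zero]
  rw [Fintype.sum_equiv (Equiv.inv (ZMod (p ^ r))ˣ)
    (fun u => ((u⁻¹ : (ZMod (p ^ r))ˣ) : ZMod (p ^ r)) ^ 2) (fun u => (u : ZMod (p ^ r)) ^ 2)
    fun _ => rfl]
  exact sum_units_pow_eq_zero _ 2 h3

theorem norm_sum_inv_mul_reflect_oddBlock_le (hp2 : p ≠ 2) (hp3 : p ≠ 3) (hr : 0 < r)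
    (l : ℕ) :
    ‖∑ k ∈ oddBlock p (p ^ r) l,
      ((2 * (k : ℚ_[p]) + 1) * (2 * (((2 * l + 1) * p ^ r - 1 - k : ℕ) : ℚ_[p]) + 1))⁻¹‖
        ≤ (p : ℝ) ^ (-r : ℤ) := by
  have hcop : ∀ k ∈ oddBlock p (p ^ r) l,
      p.Coprime ((2 * k + 1) * (2 * ((2 * l + 1) * p ^ r - 1 - k) + 1)) := fun k hk =>
    have hk' := reflect_mem_oddBlock (dvd_pow_self p hr.ne') hk
    Nat.Coprime.mul_right (hp.out.coprime_iff_not_dvd.mpr (mem_filter.mp hk).2)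
      (hp.out.coprime_iff_not_dvd.mpr (mem_filter.mp hk').2)
  have := Padic.norm_sum_inv_natCast_le hcop (sum_inv_mul_reflect_oddBlock_eq_zero hp2 hp3 hr l)
  push_cast at this
  exact this

end PrimePower

theorem sum_inv_two_k_add_one_congruence (p : ℕ) [Fact p.Prime] (hp5 : 5 ≤ p)
    (r : ℕ) (hr : 0 < r) (l : ℕ) :
    ‖∑ k ∈ (Finset.Ico (l * p ^ r) ((l + 1) * p ^ r)).filter
        (fun k => ¬ p ∣ (2 * k + 1)), ((2 * (k : ℚ_[p]) + 1))⁻¹‖ ≤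
      (p : ℝ) ^ (-(2 * (r : ℤ))) := by
  change ‖∑ k ∈ oddBlock p (p ^ r) l, (2 * (k : ℚ_[p]) + 1)⁻¹‖ ≤ _
  have hpr : p.Prime := Fact.out
  have hpair := two_mul_sum_inv_eq_mul_sum_inv_mul (fun k => (2 * l + 1) * p ^ r - 1 - k)
    (fun k hk => reflect_mem_oddBlock (dvd_pow_self p hr.ne') hk)
    (fun k hk => reflect_reflect (mem_filter.mp hk).1) (a := fun k => 2 * (k : ℚ_[p]) + 1)
    (fun k _ => by exact_mod_cast (2 * k).succ_ne_zero)
    (M := ((2 * ((2 * l + 1) * p ^ r) : ℕ) : ℚ_[p]))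
    (fun k hk => by exact_mod_cast two_mul_add_one_add_reflect (mem_filter.mp hk).1)
  have hM : ‖((2 * ((2 * l + 1) * p ^ r) : ℕ) : ℚ_[p])‖ ≤ (p : ℝ) ^ (-r : ℤ) := by
    simpa using (Padic.norm_int_le_pow_iff_dvd (p := p) (2 * ((2 * l + 1) * p ^ r)) r).mpr
      (by exact_mod_cast (dvd_mul_left _ _).mul_left 2)
  have h2 : ‖(2 : ℚ_[p])‖ = 1 := by
    simpa using Padic.norm_natCast_eq_one_iff.mpr
      ((Nat.coprime_primes hpr Nat.prime_two).mpr (by omega))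
  calc _ = ‖2 * ∑ k ∈ oddBlock p (p ^ r) l, (2 * (k : ℚ_[p]) + 1)⁻¹‖ := by
        rw [norm_mul, h2, one_mul]
    _ ≤ (p : ℝ) ^ (-r : ℤ) * (p : ℝ) ^ (-r : ℤ) := by
        rw [hpair, norm_mul]
        exact mul_le_mul hM (norm_sum_inv_mul_reflect_oddBlock_le (by omega) (by omega) hr l)
          (norm_nonneg _) (by positivity)
    _ = (p : ℝ) ^ (-(2 * (r : ℤ))) := by
        rw [← zpow_add₀ (by exact_mod_cast hpr.ne_zero)]
        ring_nf
end

section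
/- Let p ≥ 5 be a prime, r a positive integer, and l a nonnegative integer. Then \sum_{k : \lfloor k/p^r \rfloor = l} \sum_{j=1, p \nmid j}^{k} \frac{1}{j^2} \equiv 0 \pmod{p^{2r}}. -/
/-!
Write `P = p ^ r`, `a = l P` and `H k = ∑ j ≤ k, p ∤ j, j⁻²`. Summation by parts gives
`∑_{a ≤ k < a + P} H k = P · H (a - 1) + (a + P) · ∑' j⁻² - ∑' j⁻¹`, the primed sums running over
the units `a ≤ j < a + P`. A sum of `j⁻²` over a complete residue system mod `P` is `≡ 0 mod P`:
multiplication by `2` permutes the residues, so the sum `S` satisfies `S ≡ S / 4`, and `3` is a unit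
as `p ≥ 5`. This takes care of the first two terms. For the last one, pairing `j` with `Q - j`,
`Q = 2 a + P`, gives `2 ∑' j⁻¹ = Q (Q ∑' 1 / (j² (Q - j)) - ∑' j⁻²) ≡ 0 mod P²`.
-/

open Finset IsUltrametricDist

noncomputable def restrictedInvPow (p : ℕ) [Fact p.Prime] (e j : ℕ) : ℚ_[p] :=
  if p ∣ j then 0 else ((j : ℚ_[p]) ^ e)⁻¹

theorem Finset.sum_range_comp_mul_mod {M : Type*} [AddCommMonoid M] (f : ℕ → M) {c n : ℕ}
    (hc : c.Coprime n) : ∑ x ∈ range n, f (c * x % n) = ∑ x ∈ range n, f x := by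
  have hmaps : Set.MapsTo (fun x => c * x % n) (range n : Set ℕ) (range n) := fun x hx => by
    simp only [coe_range, Set.mem_Iio] at hx ⊢
    exact Nat.mod_lt _ (by omega)
  have hinj : Set.InjOn (fun x => c * x % n) (range n : Set ℕ) := fun x hx y hy hxy =>
    (Nat.ModEq.cancel_left_of_coprime hc.symm hxy).eq_of_lt_of_lt (by simpa using hx)
      (by simpa using hy)
  have hbij := ((range n).finite_toSet.injOn_iff_bijOn_of_mapsTo hmaps).mp hinj
  exact sum_nbij _ hmaps hinj hbij.surjOn fun _ _ => rfl

theorem Finset.sum_range_sum_range_add_succ {M : Type*} [AddCommMonoid M] (f : ℕ → M)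
    (a n : ℕ) :
    ∑ k ∈ range n, ∑ j ∈ range (a + k + 1), f j =
      n • ∑ j ∈ range a, f j + ∑ x ∈ range n, (n - x) • f (a + x) := by
  induction n with
  | zero => simp
  | succ n ih =>
    have hweights : ∑ x ∈ range (n + 1), (n + 1 - x) • f (a + x) =
        ∑ x ∈ range n, (n - x) • f (a + x) + ∑ x ∈ range (n + 1), f (a + x) := by
      rw [← add_zero (∑ x ∈ range n, _), ← zero_nsmul (f (a + n)), ← Nat.sub_self n,
        ← sum_range_succ (fun x => (n - x) • f (a + x)), ← sum_add_distrib]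
      refine sum_congr rfl fun x hx => ?_
      rw [← succ_nsmul, Nat.sub_add_comm (mem_range_succ_iff.mp hx)]
    have hprefix : ∑ j ∈ range (a + n + 1), f j =
        ∑ j ∈ range a, f j + ∑ x ∈ range (n + 1), f (a + x) :=
      sum_range_add f a (n + 1)
    rw [sum_range_succ, ih, hprefix, hweights, succ_nsmul]
    abel

theorem norm_inv_sub_inv_of_norm_eq_one {K : Type*} [NormedDivisionRing K] {a b : K}
    (ha : ‖a‖ = 1) (hb : ‖b‖ = 1) : ‖a⁻¹ - b⁻¹‖ = ‖a - b‖ := by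
  rw [inv_sub_inv' (norm_ne_zero_iff.mp (by simp [ha])) (norm_ne_zero_iff.mp (by simp [hb])),
    norm_mul, norm_mul, norm_inv, norm_inv, ha, hb, norm_sub_rev]
  simp

section

variable {p : ℕ} [Fact p.Prime]

theorem Padic.norm_natCast_eq_one_of_not_dvd {n : ℕ} (h : ¬ p ∣ n) : ‖(n : ℚ_[p])‖ = 1 :=
  Padic.norm_natCast_eq_one_iff.mpr ((Fact.out : p.Prime).coprime_iff_not_dvd.mpr h)

theorem Padic.norm_natCast_le_of_pow_dvd {n r : ℕ} (h : p ^ r ∣ n) :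
    ‖(n : ℚ_[p])‖ ≤ (p : ℝ) ^ (-(r : ℤ)) := by
  exact_mod_cast (Padic.norm_int_le_pow_iff_dvd (n : ℤ) r).mpr (by exact_mod_cast h)

theorem Padic.norm_natCast_sub_le_of_modEq {a b r : ℕ} (h : a ≡ b [MOD p ^ r]) :
    ‖(a : ℚ_[p]) - b‖ ≤ (p : ℝ) ^ (-(r : ℤ)) := by
  rw [norm_sub_rev]
  exact_mod_cast (Padic.norm_int_le_pow_iff_dvd ((b : ℤ) - a) r).mpr
    (by exact_mod_cast Nat.modEq_iff_dvd.mp h)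

theorem Padic.norm_mul_le_zpow_neg_two_mul {x y : ℚ_[p]} {r : ℕ}
    (hx : ‖x‖ ≤ (p : ℝ) ^ (-(r : ℤ))) (hy : ‖y‖ ≤ (p : ℝ) ^ (-(r : ℤ))) :
    ‖x * y‖ ≤ (p : ℝ) ^ (-(2 * (r : ℤ))) := by
  have hp : (p : ℝ) ≠ 0 := by exact_mod_cast (Fact.out : p.Prime).ne_zero
  rw [norm_mul, show -(2 * (r : ℤ)) = -r + -r by ring, zpow_add₀ hp]
  exact mul_le_mul hx hy (norm_nonneg _) (by positivity)

namespace restrictedInvPow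

theorem of_dvd {e j : ℕ} (h : p ∣ j) : restrictedInvPow p e j = 0 := if_pos h

theorem of_not_dvd {e j : ℕ} (h : ¬ p ∣ j) : restrictedInvPow p e j = ((j : ℚ_[p]) ^ e)⁻¹ :=
  if_neg h

theorem norm_le_one (e j : ℕ) : ‖restrictedInvPow p e j‖ ≤ 1 := by
  by_cases h : p ∣ j
  · simp [of_dvd h]
  · simp [of_not_dvd h, Padic.norm_natCast_eq_one_of_not_dvd h]

theorem natCast_mul_succ (e j : ℕ) :
    (j : ℚ_[p]) * restrictedInvPow p (e + 1) j = restrictedInvPow p e j := by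
  by_cases h : p ∣ j
  · simp [of_dvd h]
  · have hj : (j : ℚ_[p]) ≠ 0 := Nat.cast_ne_zero.mpr fun hj => h (hj ▸ dvd_zero p)
    rw [of_not_dvd h, of_not_dvd h, pow_succ', mul_inv, ← mul_assoc, mul_inv_cancel₀ hj, one_mul]

theorem mul_left {c : ℕ} (hc : ¬ p ∣ c) (e j : ℕ) :
    restrictedInvPow p e (c * j) = ((c : ℚ_[p]) ^ e)⁻¹ * restrictedInvPow p e j := by
  by_cases h : p ∣ j
  · simp [of_dvd h, of_dvd (dvd_mul_of_dvd_right h c)]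
  · rw [of_not_dvd h, of_not_dvd ((Nat.Prime.dvd_mul Fact.out).not.mpr (not_or.mpr ⟨hc, h⟩))]
    push_cast
    rw [mul_pow, mul_inv]

theorem norm_sub_le_of_modEq {r : ℕ} (hr : 0 < r) (e : ℕ) {a b : ℕ} (h : a ≡ b [MOD p ^ r]) :
    ‖restrictedInvPow p e a - restrictedInvPow p e b‖ ≤ (p : ℝ) ^ (-(r : ℤ)) := by
  have hdvd : p ∣ a ↔ p ∣ b := (h.of_dvd (dvd_pow_self p hr.ne')).dvd_iff dvd_rfl
  by_cases ha : p ∣ a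
  · simp [of_dvd ha, of_dvd (hdvd.mp ha)]
  have hb : ¬ p ∣ b := hdvd.not.mp ha
  rw [of_not_dvd ha, of_not_dvd hb]
  have hpow (n : ℕ) (hn : ¬ p ∣ n) : ‖(n : ℚ_[p]) ^ e‖ = 1 := by
    rw [norm_pow, Padic.norm_natCast_eq_one_of_not_dvd hn, one_pow]
  rw [norm_inv_sub_inv_of_norm_eq_one (hpow a ha) (hpow b hb)]
  exact_mod_cast Padic.norm_natCast_sub_le_of_modEq (h.pow e)

/-- `1/u + 1/v = Q/(u v)` and `1/(u v) = -1/u² + Q/(u² v)`, where `Q = u + v`. -/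
theorem one_add_one_eq {u v : ℕ} (h : p ∣ u + v) :
    restrictedInvPow p 1 u + restrictedInvPow p 1 v =
      ((u + v : ℕ) : ℚ_[p]) * (((u + v : ℕ) : ℚ_[p]) *
        (restrictedInvPow p 2 u * restrictedInvPow p 1 v) - restrictedInvPow p 2 u) := by
  by_cases hu : p ∣ u
  · simp [of_dvd hu, of_dvd ((Nat.dvd_add_right hu).mp h)]
  have hv : ¬ p ∣ v := fun hv => hu ((Nat.dvd_add_left hv).mp h)
  have hu0 : (u : ℚ_[p]) ≠ 0 := Nat.cast_ne_zero.mpr fun h0 => hu (h0 ▸ dvd_zero p)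
  have hv0 : (v : ℚ_[p]) ≠ 0 := Nat.cast_ne_zero.mpr fun h0 => hv (h0 ▸ dvd_zero p)
  simp only [of_not_dvd hu, of_not_dvd hv]
  push_cast
  field_simp
  ring

end restrictedInvPow

open restrictedInvPow

variable {r : ℕ}

theorem norm_sum_range_restrictedInvPow_le (hr : 0 < r) {c e : ℕ} (hc : ¬ p ∣ c)
    (hce : ¬ p ∣ c ^ e - 1) :
    ‖∑ x ∈ range (p ^ r), restrictedInvPow p e x‖ ≤ (p : ℝ) ^ (-(r : ℤ)) := by
  set S := ∑ x ∈ range (p ^ r), restrictedInvPow p e x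
  have hc0 : c ≠ 0 := fun h0 => hc (h0 ▸ dvd_zero p)
  have hcop : c.Coprime (p ^ r) :=
    (Nat.coprime_comm.mp ((Fact.out : p.Prime).coprime_iff_not_dvd.mpr hc)).pow_right r
  have hdiff : S - ((c : ℚ_[p]) ^ e)⁻¹ * S = ∑ x ∈ range (p ^ r),
      (restrictedInvPow p e (c * x % p ^ r) - restrictedInvPow p e (c * x)) := by
    rw [sum_sub_distrib, sum_range_comp_mul_mod _ hcop, mul_sum]
    simp only [mul_left hc]
    rfl
  have hc1 : ‖(c : ℚ_[p]) ^ e‖ = 1 := by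
    rw [norm_pow, Padic.norm_natCast_eq_one_of_not_dvd hc, one_pow]
  have hce1 : ‖(c : ℚ_[p]) ^ e - 1‖ = 1 := by
    have hle : 1 ≤ c ^ e := Nat.one_le_pow _ _ (Nat.pos_of_ne_zero hc0)
    rw [← Padic.norm_natCast_eq_one_of_not_dvd hce]
    push_cast [Nat.cast_sub hle]
    rfl
  calc ‖S‖ = ‖((c : ℚ_[p]) ^ e)⁻¹ * ((c : ℚ_[p]) ^ e - 1) * S‖ := by
        rw [norm_mul, norm_mul, norm_inv, hc1, hce1, inv_one, one_mul, one_mul]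
    _ = ‖S - ((c : ℚ_[p]) ^ e)⁻¹ * S‖ := by
        have : (c : ℚ_[p]) ^ e ≠ 0 := pow_ne_zero _ (Nat.cast_ne_zero.mpr hc0)
        congr 1; field_simp
    _ ≤ (p : ℝ) ^ (-(r : ℤ)) := by
        rw [hdiff]
        exact norm_sum_le_of_forall_le_of_nonneg (by positivity) fun x _ =>
          norm_sub_le_of_modEq hr e (Nat.mod_modEq _ _)

theorem norm_sum_range_restrictedInvPow_add_sub_le (hr : 0 < r) (e : ℕ) {a : ℕ}
    (ha : p ^ r ∣ a) :
    ‖∑ x ∈ range (p ^ r), restrictedInvPow p e (a + x) -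
        ∑ x ∈ range (p ^ r), restrictedInvPow p e x‖ ≤ (p : ℝ) ^ (-(r : ℤ)) := by
  rw [← sum_sub_distrib]
  refine norm_sum_le_of_forall_le_of_nonneg (by positivity) fun x _ =>
    norm_sub_le_of_modEq hr e ?_
  simpa using (Nat.modEq_zero_iff_dvd.mpr ha).add_right x

theorem norm_sum_range_restrictedInvPow_two_add_le (hp5 : 5 ≤ p) (hr : 0 < r) {a : ℕ}
    (ha : p ^ r ∣ a) :
    ‖∑ x ∈ range (p ^ r), restrictedInvPow p 2 (a + x)‖ ≤ (p : ℝ) ^ (-(r : ℤ)) := by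
  have h2 : ¬ p ∣ 2 := fun h => by have := Nat.le_of_dvd two_pos h; omega
  have h3 : ¬ p ∣ 2 ^ 2 - 1 := fun h => by have := Nat.le_of_dvd (by norm_num) h; omega
  rw [← sub_add_cancel (∑ x ∈ range (p ^ r), _) (∑ x ∈ range (p ^ r), restrictedInvPow p 2 x)]
  exact (norm_add_le_max _ _).trans (max_le (norm_sum_range_restrictedInvPow_add_sub_le hr 2 ha)
    (norm_sum_range_restrictedInvPow_le hr h2 h3))

theorem norm_sum_range_mul_restrictedInvPow_two_le (hp5 : 5 ≤ p) (hr : 0 < r) (l : ℕ) :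
    ‖∑ j ∈ range (l * p ^ r), restrictedInvPow p 2 j‖ ≤ (p : ℝ) ^ (-(r : ℤ)) := by
  induction l with
  | zero =>
    simp only [zero_mul, range_zero, sum_empty, norm_zero]
    positivity
  | succ l ih =>
    rw [add_one_mul, sum_range_add]
    exact (norm_add_le_max _ _).trans
      (max_le ih (norm_sum_range_restrictedInvPow_two_add_le hp5 hr (dvd_mul_left _ _)))

theorem two_mul_sum_range_restrictedInvPow_one_add {a P : ℕ} (ha : p ∣ a) (hP : p ∣ P) :
    2 * ∑ x ∈ range P, restrictedInvPow p 1 (a + x) =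
      ((2 * a + P : ℕ) : ℚ_[p]) * ((2 * a + P : ℕ) *
        ∑ x ∈ range (P + 1), restrictedInvPow p 2 (a + x) * restrictedInvPow p 1 (a + (P - x)) -
          ∑ x ∈ range P, restrictedInvPow p 2 (a + x)) := by
  have hext (e : ℕ) : ∑ x ∈ range (P + 1), restrictedInvPow p e (a + x) =
      ∑ x ∈ range P, restrictedInvPow p e (a + x) := by
    rw [sum_range_succ, of_dvd (dvd_add ha hP), add_zero]
  have hreflect : ∑ x ∈ range (P + 1), restrictedInvPow p 1 (a + (P - x)) =
      ∑ x ∈ range (P + 1), restrictedInvPow p 1 (a + x) := by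
    simpa using sum_range_reflect (fun x => restrictedInvPow p 1 (a + x)) (P + 1)
  rw [two_mul, ← hext 1, ← hext 2]
  nth_rw 2 [← hreflect]
  rw [← sum_add_distrib]
  simp only [mul_sub, mul_sum, ← sum_sub_distrib]
  refine sum_congr rfl fun x hx => ?_
  have hpair : a + x + (a + (P - x)) = 2 * a + P := by have := mem_range_succ_iff.mp hx; omega
  rw [one_add_one_eq (hpair ▸ dvd_add (dvd_mul_of_dvd_right ha 2) hP), hpair, mul_sub]

theorem norm_sum_range_restrictedInvPow_one_add_le (hp5 : 5 ≤ p) (hr : 0 < r) {a : ℕ}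
    (ha : p ^ r ∣ a) :
    ‖∑ x ∈ range (p ^ r), restrictedInvPow p 1 (a + x)‖ ≤ (p : ℝ) ^ (-(2 * (r : ℤ))) := by
  have hpP : p ∣ p ^ r := dvd_pow_self p hr.ne'
  set W := ∑ x ∈ range (p ^ r + 1),
    restrictedInvPow p 2 (a + x) * restrictedInvPow p 1 (a + (p ^ r - x))
  have hQ : ‖((2 * a + p ^ r : ℕ) : ℚ_[p])‖ ≤ (p : ℝ) ^ (-(r : ℤ)) :=
    Padic.norm_natCast_le_of_pow_dvd (dvd_add (dvd_mul_of_dvd_right ha 2) dvd_rfl)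
  have hW : ‖W‖ ≤ 1 := norm_sum_le_of_forall_le_of_nonneg zero_le_one fun x _ => by
    rw [norm_mul]
    exact mul_le_one₀ (norm_le_one _ _) (norm_nonneg _) (norm_le_one _ _)
  have hQW : ‖((2 * a + p ^ r : ℕ) : ℚ_[p]) * W‖ ≤ (p : ℝ) ^ (-(r : ℤ)) := by
    rw [norm_mul]
    exact (mul_le_of_le_one_right (norm_nonneg _) hW).trans hQ
  have h2 : ‖(2 : ℚ_[p])‖ = 1 := by
    exact_mod_cast Padic.norm_natCast_eq_one_of_not_dvd (p := p) (n := 2)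
      fun h => by have := Nat.le_of_dvd two_pos h; omega
  rw [← one_mul ‖_‖, ← h2, ← norm_mul,
    two_mul_sum_range_restrictedInvPow_one_add (hpP.trans ha) hpP, sub_eq_add_neg]
  refine Padic.norm_mul_le_zpow_neg_two_mul hQ ((norm_add_le_max _ _).trans (max_le hQW ?_))
  rw [norm_neg]
  exact norm_sum_range_restrictedInvPow_two_add_le hp5 hr ha

theorem sum_filter_Icc_one_eq_sum_range_restrictedInvPow (e k : ℕ) :
    ∑ j ∈ (Icc 1 k).filter (fun j => ¬ p ∣ j), ((j : ℚ_[p]) ^ e)⁻¹ =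
      ∑ j ∈ range (k + 1), restrictedInvPow p e j := by
  rw [sum_range_succ', of_dvd (dvd_zero p), add_zero, sum_filter, ← Ico_add_one_right_eq_Icc,
    sum_Ico_eq_sum_range, Nat.add_sub_cancel]
  refine sum_congr rfl fun j _ => ?_
  rw [restrictedInvPow, add_comm, ite_not]

theorem sum_range_sub_nsmul_restrictedInvPow_two (a n : ℕ) :
    ∑ x ∈ range n, (n - x) • restrictedInvPow p 2 (a + x) =
      ((a + n : ℕ) : ℚ_[p]) * ∑ x ∈ range n, restrictedInvPow p 2 (a + x) -
        ∑ x ∈ range n, restrictedInvPow p 1 (a + x) := by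
  rw [mul_sum, ← sum_sub_distrib]
  refine sum_congr rfl fun x hx => ?_
  rw [nsmul_eq_mul, Nat.cast_sub (mem_range.mp hx).le, ← natCast_mul_succ 1 (a + x)]
  push_cast
  ring

end

theorem double_sum_inv_sq_congruence (p : ℕ) [Fact p.Prime] (hp5 : 5 ≤ p)
    (r : ℕ) (hr : 0 < r) (l : ℕ) :
    ‖∑ k ∈ Finset.Ico (l * p ^ r) ((l + 1) * p ^ r),
        ∑ j ∈ (Finset.Icc 1 k).filter (fun j => ¬ p ∣ j), ((j : ℚ_[p]) ^ 2)⁻¹‖ ≤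
      (p : ℝ) ^ (-(2 * (r : ℤ))) := by
  have hblock : l * p ^ r + p ^ r = (l + 1) * p ^ r := (add_one_mul l _).symm
  have hdvd : p ^ r ∣ l * p ^ r := dvd_mul_left _ _
  rw [sum_Ico_eq_sum_range, ← hblock, Nat.add_sub_cancel_left]
  simp only [sum_filter_Icc_one_eq_sum_range_restrictedInvPow]
  rw [sum_range_sum_range_add_succ, sum_range_sub_nsmul_restrictedInvPow_two, nsmul_eq_mul,
    sub_eq_add_neg]
  refine (norm_add_le_max _ _).trans (max_le ?_ ((norm_add_le_max _ _).trans (max_le ?_ ?_)))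
  · exact Padic.norm_mul_le_zpow_neg_two_mul (Padic.norm_natCast_le_of_pow_dvd dvd_rfl)
      (norm_sum_range_mul_restrictedInvPow_two_le hp5 hr l)
  · exact Padic.norm_mul_le_zpow_neg_two_mul
      (Padic.norm_natCast_le_of_pow_dvd (hblock ▸ dvd_mul_left _ _))
      (norm_sum_range_restrictedInvPow_two_add_le hp5 hr hdvd)
  · rw [norm_neg]
    exact norm_sum_range_restrictedInvPow_one_add_le hp5 hr hdvd
end

section
/- Let p ≥ 5 be a prime, s a positive integer, and l a nonnegative integer. Then \sum_{j=1, p \nmid j}^{l p^s + (p^s - 1)/2} \frac{1}{j^2} \equiv 0 \pmod{p^s}. -/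
/-!
Every `j` prime to `p` is a unit of `ℤ_[p]`, so the sum lies in `ℤ_[p]`, and its norm is at most
`p ^ (-s)` exactly when its image in `ZMod (p ^ s)` vanishes. That image is the sum of `j⁻²`
over the same range, where the ring inverse `j⁻¹ʳ` is zero on the multiples of `p`.

In a finite ring the sum of `x⁻²` over all `x` is multiplied by `4⁻¹` under `x ↦ 2 x`, so it
vanishes once `2` and `3` are units. The summand is periodic mod `p ^ s` and even, so the sum over
one period is twice the sum over `0, …, (p ^ s - 1) / 2`, which therefore vanishes as well; the
given range consists of `l` full periods followed by such a half period.
-/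

open Finset
open scoped Ring

theorem Ring.inverse_neg {R : Type*} [Ring R] (x : R) : (-x)⁻¹ʳ = -x⁻¹ʳ := by
  by_cases hx : IsUnit x
  · obtain ⟨u, rfl⟩ := hx
    rw [← Units.val_neg, Ring.inverse_unit, Ring.inverse_unit]
    simp
  · rw [Ring.inverse_non_unit x hx, Ring.inverse_non_unit _ (by rwa [IsUnit.neg_iff]), neg_zero]

theorem map_ringInverse {M₀ N₀ F : Type*} [MonoidWithZero M₀] [MonoidWithZero N₀] [FunLike F M₀ N₀]
    [MonoidHomClass F M₀ N₀] (f : F) {x : M₀} (hx : IsUnit x) : f x⁻¹ʳ = (f x)⁻¹ʳ := by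
  obtain ⟨u, rfl⟩ := hx
  change (f : M₀ →* N₀) (u : M₀)⁻¹ʳ = ((f : M₀ →* N₀) u)⁻¹ʳ
  rw [Ring.inverse_unit, ← Units.coe_map, ← Units.coe_map, Ring.inverse_unit, map_inv]

theorem sum_ringInverse_pow_eq_zero {R : Type*} [CommRing R] [Fintype R] {a : R} (k : ℕ)
    (ha : IsUnit a) (hak : IsUnit (a ^ k - 1)) : ∑ x : R, x⁻¹ʳ ^ k = 0 := by
  set S := ∑ x : R, x⁻¹ʳ ^ k
  have hdil : a⁻¹ʳ ^ k * S = S := by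
    rw [mul_sum]
    refine Fintype.sum_bijective (a * ·) (IsUnit.isUnit_iff_mulLeft_bijective.1 ha) _ _ fun x => ?_
    rw [Ring.inverse_mul (.inl ha), mul_pow, mul_comm]
  refine hak.mul_right_eq_zero.1 ?_
  calc (a ^ k - 1) * S = a ^ k * (a⁻¹ʳ ^ k * S) - S := by rw [hdil]; ring
    _ = 0 := by rw [← mul_assoc, ← mul_pow, Ring.mul_inverse_cancel a ha, one_pow, one_mul, sub_self]

theorem Function.Periodic.sum_range_mul_add {M : Type*} [AddCommMonoid M] {f : ℕ → M} {n : ℕ}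
    (hf : Function.Periodic f n) (l m : ℕ) :
    ∑ j ∈ range (l * n + m), f j = l • ∑ j ∈ range n, f j + ∑ j ∈ range m, f j := by
  induction l with
  | zero => simp
  | succ l ih =>
    rw [show (l + 1) * n + m = n + (l * n + m) by ring, sum_range_add]
    simp only [add_comm n, hf _, ih, succ_nsmul']
    abel

theorem sum_range_two_mul_add_one_add_eq_two_nsmul {M : Type*} [AddCommMonoid M] {f : ℕ → M}
    {h : ℕ} (hf : ∀ j ≤ 2 * h + 1, f (2 * h + 1 - j) = f j) :
    ∑ j ∈ range (2 * h + 1), f j + f 0 = 2 • ∑ j ∈ range (h + 1), f j := by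
  have hreflect : ∑ j ∈ range h, f (h + 1 + j) = ∑ j ∈ range h, f (j + 1) := by
    rw [← sum_range_reflect (fun j => f (j + 1)) h]
    refine sum_congr rfl fun j hj => ?_
    have := mem_range.1 hj
    rw [← hf _ (by omega)]
    congr 1
    omega
  rw [show 2 * h + 1 = (h + 1) + h by ring, sum_range_add, hreflect, add_assoc, ← sum_range_succ',
    two_nsmul]

theorem ZMod.sum_range_natCast {M : Type*} [AddCommMonoid M] (n : ℕ) [NeZero n] (g : ZMod n → M) :
    ∑ j ∈ range n, g j = ∑ x : ZMod n, g x :=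
  sum_nbij' Nat.cast ZMod.val (by simp) (by simp [ZMod.val_lt])
    (fun j hj => ZMod.val_cast_of_lt (mem_range.1 hj)) (fun x _ => ZMod.natCast_zmod_val x)
    (fun _ _ => rfl)

theorem ZMod.sum_Icc_ringInverse_sq_eq_zero {n : ℕ} (hn : n.Coprime 6) (l : ℕ) :
    ∑ j ∈ Icc 1 (l * n + (n - 1) / 2), (j : ZMod n)⁻¹ʳ ^ 2 = 0 := by
  obtain ⟨h, rfl⟩ : Odd n := Nat.coprime_two_right.1 (hn.coprime_dvd_right (by norm_num))
  have hunit : ∀ m : ℕ, m ∣ 6 → IsUnit (m : ZMod (2 * h + 1)) := fun m hm =>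
    (ZMod.isUnit_iff_coprime _ _).2 (hn.coprime_dvd_right hm).symm
  set f : ℕ → ZMod (2 * h + 1) := fun j => (j : ZMod (2 * h + 1))⁻¹ʳ ^ 2
  have hf0 : f 0 = 0 := by simp [f]
  have hperiodic : Function.Periodic f (2 * h + 1) := fun j => by simp [f]
  have hreflect : ∀ j ≤ 2 * h + 1, f (2 * h + 1 - j) = f j := fun j hj => by
    simp [f, Nat.cast_sub hj, Ring.inverse_neg]
  have htwo : IsUnit (2 : ZMod (2 * h + 1)) := by exact_mod_cast hunit 2 (by norm_num)
  have hthree : IsUnit ((2 : ZMod (2 * h + 1)) ^ 2 - 1) := by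
    rw [show (2 : ZMod (2 * h + 1)) ^ 2 - 1 = ((3 : ℕ) : ZMod (2 * h + 1)) by norm_num]
    exact hunit 3 (by norm_num)
  have hperiod_sum : ∑ j ∈ range (2 * h + 1), f j = 0 := by
    rw [ZMod.sum_range_natCast (g := fun x => x⁻¹ʳ ^ 2)]
    exact sum_ringInverse_pow_eq_zero 2 htwo hthree
  have hhalf_sum : ∑ j ∈ range (h + 1), f j = 0 := by
    have hpair := sum_range_two_mul_add_one_add_eq_two_nsmul hreflect
    rw [hperiod_sum, hf0, add_zero, eq_comm, two_nsmul, ← two_mul] at hpair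
    exact htwo.mul_right_eq_zero.1 hpair
  have hIcc : ∑ j ∈ Icc 1 (l * (2 * h + 1) + (2 * h + 1 - 1) / 2), f j
      = ∑ j ∈ range (l * (2 * h + 1) + (h + 1)), f j := by
    rw [range_eq_Ico, sum_eq_sum_Ico_succ_bot (by omega), hf0, zero_add, ← Ico_add_one_right_eq_Icc]
    congr 2
    omega
  rw [hIcc, hperiodic.sum_range_mul_add, hperiod_sum, hhalf_sum, smul_zero, add_zero]

theorem PadicInt.norm_sum_inv_pow_le {p : ℕ} [Fact p.Prime] {s k : ℕ} {F : Finset ℕ}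
    (hF : ∀ j ∈ F, p.Coprime j) (h : ∑ j ∈ F, (j : ZMod (p ^ s))⁻¹ʳ ^ k = 0) :
    ‖∑ j ∈ F, ((j : ℚ_[p]) ^ k)⁻¹‖ ≤ (p : ℝ) ^ (-(s : ℤ)) := by
  have hunit : ∀ j ∈ F, IsUnit (j : ℤ_[p]) := fun j hj =>
    PadicInt.isUnit_iff.2 (PadicInt.norm_natCast_eq_one_iff.2 (hF j hj))
  set x : ℤ_[p] := ∑ j ∈ F, (j : ℤ_[p])⁻¹ʳ ^ k
  have hcoe : (x : ℚ_[p]) = ∑ j ∈ F, ((j : ℚ_[p]) ^ k)⁻¹ := by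
    rw [PadicInt.coe_sum]
    refine sum_congr rfl fun j hj => ?_
    have hinv : (((j : ℤ_[p])⁻¹ʳ : ℤ_[p]) : ℚ_[p]) = (j : ℚ_[p])⁻¹ := by
      rw [← Ring.inverse_eq_inv, ← map_natCast PadicInt.Coe.ringHom]
      exact map_ringInverse PadicInt.Coe.ringHom (hunit j hj)
    rw [PadicInt.coe_pow, hinv, inv_pow]
  have hker : PadicInt.toZModPow s x = 0 := by
    rw [map_sum, ← h]
    refine sum_congr rfl fun j hj => ?_
    rw [map_pow, map_ringInverse _ (hunit j hj), map_natCast]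
  rw [← hcoe, ← PadicInt.norm_def, PadicInt.norm_le_pow_iff_mem_span_pow, ← PadicInt.ker_toZModPow, RingHom.mem_ker]
  exact hker

theorem sum_inv_sq_up_to_half_congruence (p : ℕ) [Fact p.Prime] (hp5 : 5 ≤ p)
    (s : ℕ) (hs : 0 < s) (l : ℕ) :
    ‖∑ j ∈ (Finset.Icc 1 (l * p ^ s + (p ^ s - 1) / 2)).filter (fun j => ¬ p ∣ j),
        ((j : ℚ_[p]) ^ 2)⁻¹‖ ≤ (p : ℝ) ^ (-(s : ℤ)) := by
  have hp : p.Prime := Fact.out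
  have hp6 : (p ^ s).Coprime 6 := by
    refine Nat.Coprime.pow_left _ (hp.coprime_iff_not_dvd.2 fun hdvd => ?_)
    rcases hp.dvd_mul.1 (show p ∣ 2 * 3 from hdvd) with h | h <;>
      have := Nat.le_of_dvd (by norm_num) h <;> omega
  have hvanish : ∀ j, p ∣ j → (j : ZMod (p ^ s))⁻¹ʳ ^ 2 = 0 := fun j hdvd => by
    rw [Ring.inverse_non_unit _ ?_, zero_pow two_ne_zero]
    rw [ZMod.isUnit_iff_coprime, Nat.coprime_pow_right_iff hs, Nat.coprime_comm]
    exact hp.dvd_iff_not_coprime.1 hdvd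
  refine PadicInt.norm_sum_inv_pow_le (fun j hj => hp.coprime_iff_not_dvd.2 (mem_filter.1 hj).2) ?_
  rw [sum_filter_of_ne fun j _ hj => mt (hvanish j) hj]
  exact ZMod.sum_Icc_ringInverse_sq_eq_zero hp6 l
end
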